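/- arXiv:2510.26176 — 3 statements merged into one kernel-verified Lean document; each statement's English description precedes it below -/
import Mathlib

section
/- For any n ≥ 1, the Morse complex of the extended star graph S_{1,n} (one edge and n paths of length 2 joined at a common center) is homotopy equivalent to the n-sphere S^n. -/
/-- An abstract simplicial complex on vertex type `V`: a collection of nonempty
finite subsets of `V` closed under passing to nonempty subsets. -/
structure ASC (V : Type*) where
  faces : Set (Finset V)
  nonempty_of_mem : ∀ {s : Finset V}, s ∈ faces → s.Nonempty
  down_closed : ∀ {s t : Finset V}, s ∈ faces → t ⊆ s → t.Nonempty → t ∈ faces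

namespace ASC

variable {V W : Type*}

/-- A facet is a maximal face. -/
def IsFacet (K : ASC V) (s : Finset V) : Prop :=
  s ∈ K.faces ∧ ∀ t ∈ K.faces, s ⊆ t → s = t

/-- `v` dominates `v'` if every facet containing `v'` also contains `v`. -/
def Dominates (K : ASC V) (v v' : V) : Prop :=
  v ≠ v' ∧ ∀ F, K.IsFacet F → v' ∈ F → v ∈ F

/-- Deletion of a vertex. -/
def delete (K : ASC V) (v' : V) : ASC V where
  faces := {s ∈ K.faces | v' ∉ s}
  nonempty_of_mem h := K.nonempty_of_mem h.1
  down_closed hs hts htne := ⟨K.down_closed hs.1 hts htne, fun hmem => hs.2 (hts hmem)⟩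

/-- The complex consisting of a single point. -/
def point (p : V) : ASC V where
  faces := {{p}}
  nonempty_of_mem h := by simp only [Set.mem_singleton_iff] at h; subst h; exact ⟨p, by simp⟩
  down_closed := by
    intro s t hs hts htne
    simp only [Set.mem_singleton_iff] at *
    subst hs
    rcases Finset.subset_singleton_iff.mp hts with h | h
    · exact absurd h (Finset.nonempty_iff_ne_empty.mp htne)
    · exact h

/-- Elementary strong collapses from `K` to `L`. -/
inductive StrongCollapsesTo : ASC V → ASC V → Prop
  | refl (K : ASC V) : StrongCollapsesTo K K
  | step {K L : ASC V} (v v' : V) : K.Dominates v v' →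
      StrongCollapsesTo (K.delete v') L → StrongCollapsesTo K L

/-- A complex is strongly collapsible if it strong collapses to a point. -/
def StronglyCollapsible (K : ASC V) : Prop :=
  ∃ p : V, StrongCollapsesTo K (ASC.point p)

/-- Elementary collapses (free face removals) from `K` to `L`. -/
inductive CollapsesTo : ASC V → ASC V → Prop
  | refl (K : ASC V) : CollapsesTo K K
  | step {K L M : ASC V} (σ τ : Finset V) :
      σ ∈ K.faces → τ ∈ K.faces → σ ⊂ τ →
      (∀ ρ ∈ K.faces, σ ⊂ ρ → ρ = τ) →
      L.faces = K.faces \ {σ, τ} →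
      CollapsesTo L M → CollapsesTo K M

/-- A complex is collapsible if it collapses to a point. -/
def Collapsible (K : ASC V) : Prop :=
  ∃ p : V, CollapsesTo K (ASC.point p)

/-- The image complex along a vertex map. -/
def map [DecidableEq W] (f : V → W) (K : ASC V) : ASC W where
  faces := (Finset.image f) '' K.faces
  nonempty_of_mem := by
    rintro s ⟨t, ht, rfl⟩
    exact (K.nonempty_of_mem ht).image f
  down_closed := by
    rintro s t ⟨u, hu, rfl⟩ hts htne
    obtain ⟨w, hw, rfl⟩ := Finset.subset_image_iff.mp hts
    exact ⟨w, K.down_closed hu hw (Finset.image_nonempty.mp htne), rfl⟩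

/-- The join of two complexes on a common vertex type (intended for complexes
with disjoint vertex sets). -/
def join [DecidableEq V] (A B : ASC V) : ASC V where
  faces := A.faces ∪ B.faces ∪ {s | ∃ a ∈ A.faces, ∃ b ∈ B.faces, s = a ∪ b}
  nonempty_of_mem := by
    rintro s (⟨h | h⟩ | ⟨a, ha, b, hb, rfl⟩)
    · exact A.nonempty_of_mem h
    · exact B.nonempty_of_mem h
    · exact (A.nonempty_of_mem ha).mono Finset.subset_union_left
  down_closed := by
    rintro s t (⟨h | h⟩ | ⟨a, ha, b, hb, rfl⟩) hts htne
    · exact Or.inl (Or.inl (A.down_closed h hts htne))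
    · exact Or.inl (Or.inr (B.down_closed h hts htne))
    · by_cases hta : (t ∩ a).Nonempty
      · by_cases htb : (t \ a).Nonempty
        · refine Or.inr ⟨t ∩ a, A.down_closed ha Finset.inter_subset_right hta,
            t \ a, B.down_closed hb ?_ htb, by ext x; simp only [Finset.mem_union, Finset.mem_inter, Finset.mem_sdiff]; tauto⟩
          intro x hx
          rcases Finset.mem_union.mp (hts (Finset.mem_sdiff.mp hx).1) with h1 | h1
          · exact absurd h1 (Finset.mem_sdiff.mp hx).2
          · exact h1
        · refine Or.inl (Or.inl (A.down_closed ha ?_ htne))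
          intro x hx
          by_contra hxa
          exact htb ⟨x, Finset.mem_sdiff.mpr ⟨hx, hxa⟩⟩
      · refine Or.inl (Or.inr (B.down_closed hb ?_ htne))
        intro x hx
        rcases Finset.mem_union.mp (hts hx) with h1 | h1
        · exact absurd ⟨x, Finset.mem_inter.mpr ⟨hx, h1⟩⟩ hta
        · exact h1

/-- Disjoint union of two complexes. -/
def disjUnion [DecidableEq V] [DecidableEq W] (K : ASC V) (L : ASC W) : ASC (V ⊕ W) where
  faces := (K.map Sum.inl).faces ∪ (L.map Sum.inr).faces
  nonempty_of_mem := by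
    rintro s (h | h)
    · exact (K.map Sum.inl).nonempty_of_mem h
    · exact (L.map Sum.inr).nonempty_of_mem h
  down_closed := by
    rintro s t (h | h) hts htne
    · exact Or.inl ((K.map Sum.inl).down_closed h hts htne)
    · exact Or.inr ((L.map Sum.inr).down_closed h hts htne)

/-- Connectivity of a complex via edge paths. -/
def Connected [DecidableEq V] (K : ASC V) : Prop :=
  ∀ u v : V, {u} ∈ K.faces → {v} ∈ K.faces →
    ∃ (k : ℕ) (c : ℕ → V), c 0 = u ∧ c k = v ∧
      ∀ i < k, ({c i, c (i + 1)} : Finset V) ∈ K.faces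

/-- A flag complex: every set of pairwise adjacent vertices spans a simplex. -/
def IsFlag [DecidableEq V] (K : ASC V) : Prop :=
  ∀ s : Finset V, s.Nonempty → (∀ v ∈ s, ({v} : Finset V) ∈ K.faces) →
    (∀ u ∈ s, ∀ v ∈ s, u ≠ v → ({u, v} : Finset V) ∈ K.faces) → s ∈ K.faces

/-- A tree: a connected `1`-dimensional complex with no (injective) cycles. -/
def IsTree [DecidableEq V] (K : ASC V) : Prop :=
  (∀ s ∈ K.faces, s.card ≤ 2) ∧ K.Connected ∧
    ¬ ∃ (k : ℕ) (c : ℕ → V), 3 ≤ k ∧ (∀ i < k, ∀ j < k, c i = c j → i = j) ∧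
      (∀ i < k, ({c i, c (i + 1)} : Finset V) ∈ K.faces) ∧ c k = c 0

/-- The star of a vertex. -/
def star [DecidableEq V] (K : ASC V) (v : V) : ASC V where
  faces := {s ∈ K.faces | insert v s ∈ K.faces}
  nonempty_of_mem h := K.nonempty_of_mem h.1
  down_closed := by
    rintro s t ⟨hs, hvs⟩ hts htne
    exact ⟨K.down_closed hs hts htne,
      K.down_closed hvs (Finset.insert_subset_insert v hts) (Finset.insert_nonempty v t)⟩

/-- The star cluster of a simplex. -/
def starCluster [DecidableEq V] (K : ASC V) (σ : Finset V) : ASC V where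
  faces := ⋃ v ∈ σ, (K.star v).faces
  nonempty_of_mem := by
    rintro s hs
    simp only [Set.mem_iUnion] at hs
    obtain ⟨v, _, hv⟩ := hs
    exact (K.star v).nonempty_of_mem hv
  down_closed := by
    intro s t hs hts htne
    simp only [Set.mem_iUnion] at *
    obtain ⟨v, hvσ, hv⟩ := hs
    exact ⟨v, hvσ, (K.star v).down_closed hv hts htne⟩

end ASC

/-- A nontrivial closed V-path for a discrete vector field. -/
def hasClosedPath {V : Type*} (S : Set (Finset V × Finset V)) : Prop :=
  ∃ (k : ℕ) (α β : ℕ → Finset V), 0 < k ∧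
    (∀ i < k, (α i, β i) ∈ S ∧ α (i + 1) ⊆ β i ∧
      (β i).card = (α (i + 1)).card + 1 ∧ α (i + 1) ≠ α i) ∧
    α k = α 0

theorem hasClosedPath.mono {V : Type*} {S T : Set (Finset V × Finset V)}
    (h : hasClosedPath S) (hST : S ⊆ T) : hasClosedPath T := by
  obtain ⟨k, α, β, hk, hstep, hcl⟩ := h
  exact ⟨k, α, β, hk, fun i hi => ⟨hST (hstep i hi).1, (hstep i hi).2.1,
    (hstep i hi).2.2.1, (hstep i hi).2.2.2⟩, hcl⟩

/-- A discrete vector field on a collection `C` of simplices: codimension-one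
pairs from `C` with each simplex occurring in at most one pair. -/
def IsMatching {V : Type*} (C : Set (Finset V)) (M : Set (Finset V × Finset V)) : Prop :=
  (∀ p ∈ M, p.1 ∈ C ∧ p.2 ∈ C ∧ p.1 ⊆ p.2 ∧ p.2.card = p.1.card + 1) ∧
  (∀ p ∈ M, ∀ q ∈ M, p ≠ q → p.1 ≠ q.1 ∧ p.1 ≠ q.2 ∧ p.2 ≠ q.1 ∧ p.2 ≠ q.2)

/-- An acyclic matching: a discrete vector field with no nontrivial closed V-path. -/
def IsAcyclicMatching {V : Type*} (C : Set (Finset V)) (M : Set (Finset V × Finset V)) : Prop :=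
  IsMatching C M ∧ ¬ hasClosedPath M

/-- A gradient vector field on a complex `K`. -/
def IsGVF {V : Type*} (K : ASC V) (S : Set (Finset V × Finset V)) : Prop :=
  IsAcyclicMatching K.faces S

theorem IsGVF.mono {V : Type*} {K : ASC V} {S T : Set (Finset V × Finset V)}
    (h : IsGVF K T) (hST : S ⊆ T) : IsGVF K S :=
  ⟨⟨fun p hp => h.1.1 p (hST hp), fun p hp q hq => h.1.2 p (hST hp) q (hST hq)⟩,
    fun hc => h.2 (hc.mono hST)⟩

/-- The Morse complex of `K`: vertices are primitive gradient vector fields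
(codimension-one pairs), faces are gradient vector fields. -/
def MorseComplex {V : Type*} (K : ASC V) : ASC (Finset V × Finset V) where
  faces := {s | s.Nonempty ∧ IsGVF K ↑s}
  nonempty_of_mem h := h.1
  down_closed := by
    intro s t hs hts htne
    exact ⟨htne, hs.2.mono (Finset.coe_subset.mpr hts)⟩

section Spaces

/-- The geometric realization of a complex on a finite vertex type. -/
abbrev ASC.realization {V : Type*} [Fintype V] (K : ASC V) : Type _ :=
  {f : V → ℝ // (∀ v, 0 ≤ f v) ∧ (∑ v, f v) = 1 ∧ ∃ s ∈ K.faces, ∀ v, f v ≠ 0 → v ∈ s}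

/-- The `n`-sphere. -/
abbrev Sph (n : ℕ) := Metric.sphere (0 : EuclideanSpace ℝ (Fin (n + 1))) 1

noncomputable def spherePt (n : ℕ) : Sph n :=
  ⟨EuclideanSpace.single 0 1, by
    simp [mem_sphere_zero_iff_norm, EuclideanSpace.norm_single]⟩

/-- The wedge of `k` copies of the `n`-sphere (a point if `k = 0`). -/
def Wedge (k n : ℕ) : Type :=
  Quot (fun p q : (Fin k × Sph n) ⊕ Unit =>
    (∃ i : Fin k, p = Sum.inl (i, spherePt n)) ∧ q = Sum.inr ())

noncomputable instance (k n : ℕ) : TopologicalSpace (Wedge k n) := by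
  unfold Wedge; infer_instance

/-- Unreduced suspension. -/
def Susp (X : Type*) [TopologicalSpace X] : Type _ :=
  Quot (fun p q : X × unitInterval => p.2 = q.2 ∧ (p.2 = 0 ∨ p.2 = 1))

instance (X : Type*) [TopologicalSpace X] : TopologicalSpace (Susp X) := by
  unfold Susp; infer_instance

/-- Iterated suspension, as an operation on bundled topological spaces. -/
noncomputable def iterSusp : ℕ → TopCat → TopCat
  | 0, X => X
  | (n + 1), X => TopCat.of (Susp (iterSusp n X))

end Spaces

section Graphs

/-- The `1`-dimensional complex spanned by a set of (edge) finsets. -/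
def graphASC {V : Type*} (E : Set (Finset V)) : ASC V where
  faces := {s | s.Nonempty ∧ ∃ e ∈ E, s ⊆ e}
  nonempty_of_mem h := h.1
  down_closed := by
    rintro s t ⟨_, e, he, hse⟩ hts htne
    exact ⟨htne, e, he, hts.trans hse⟩

/-- The path of length `u` on vertices `0, 1, …, u`. -/
def pathComplex (u : ℕ) : ASC (Fin (u + 1)) :=
  graphASC {e | ∃ i : Fin u, e = {i.castSucc, i.succ}}

/-- Vertex type for a path of length `t` with extended stars `S_{m,n}` and
`S_{k,l}` attached at the two endpoints. -/
abbrev WGV (t m n k l : ℕ) :=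
  Fin (t + 1) ⊕ (Fin m ⊕ Fin n × Fin 2) ⊕ (Fin k ⊕ Fin l × Fin 2)

/-- The graph `P_t ∨ S_{m,n} ∨ S_{k,l}`: the extended star `S_{m,n}` (a one-point
union of `m` paths of length 1 and `n` paths of length 2) has its center at the
endpoint `v₀` of the path, and `S_{k,l}` has its center at the endpoint `v_t`.
With `t = 0` (and `k = l = 0`) this is the extended star graph `S_{m,n}` itself. -/
def wedgeGraph (t m n k l : ℕ) : ASC (WGV t m n k l) :=
  graphASC {e |
    (∃ i : Fin t, e = {Sum.inl i.castSucc, Sum.inl i.succ}) ∨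
    (∃ j : Fin m, e = {Sum.inl 0, Sum.inr (Sum.inl (Sum.inl j))}) ∨
    (∃ i : Fin n, e = {Sum.inl 0, Sum.inr (Sum.inl (Sum.inr (i, 0)))}) ∨
    (∃ i : Fin n, e = {Sum.inr (Sum.inl (Sum.inr (i, 0))), Sum.inr (Sum.inl (Sum.inr (i, 1)))}) ∨
    (∃ j : Fin k, e = {Sum.inl (Fin.last t), Sum.inr (Sum.inr (Sum.inl j))}) ∨
    (∃ s : Fin l, e = {Sum.inl (Fin.last t), Sum.inr (Sum.inr (Sum.inr (s, 0)))}) ∨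
    (∃ s : Fin l, e = {Sum.inr (Sum.inr (Sum.inr (s, 0))), Sum.inr (Sum.inr (Sum.inr (s, 1)))})}

/-- `K ∨_v P_m`: attach a path of length `m` to the vertex `v` of `K` by one
endpoint. -/
def attachPath {V : Type*} [DecidableEq V] (K : ASC V) (v : V) (m : ℕ) : ASC (V ⊕ Fin m) where
  faces := (K.map Sum.inl).faces ∪
    {s | s.Nonempty ∧ ∃ e : Finset (V ⊕ Fin m),
      ((∃ i : Fin m, i.val = 0 ∧ e = {Sum.inl v, Sum.inr i}) ∨
       (∃ i j : Fin m, j.val = i.val + 1 ∧ e = {Sum.inr i, Sum.inr j})) ∧ s ⊆ e}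
  nonempty_of_mem := by
    rintro s (h | h)
    · exact (K.map Sum.inl).nonempty_of_mem h
    · exact h.1
  down_closed := by
    rintro s t (h | ⟨_, e, he, hse⟩) hts htne
    · exact Or.inl ((K.map Sum.inl).down_closed h hts htne)
    · exact Or.inr ⟨htne, e, he, hts.trans hse⟩

end Graphs

section Posets

/-- An alternating cycle `b₁ ≻ a₁ ≺ b₂ ≻ a₂ ≺ ⋯ ≺ b_p ≻ a_p ≺ b₁` for a set of
covering pairs in a poset. -/
def HasPosetCycle {P : Type*} [PartialOrder P] (S : Set (P × P)) : Prop :=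
  ∃ p : ℕ, 2 ≤ p ∧ ∃ a b : ℕ → P,
    (∀ i < p, (a i, b i) ∈ S) ∧
    (∀ i < p, a i ⋖ b ((i + 1) % p)) ∧
    (∀ i < p, ∀ j < p, a i = a j → i = j) ∧
    (∀ i < p, ∀ j < p, b i = b j → i = j)

theorem HasPosetCycle.mono {P : Type*} [PartialOrder P] {S T : Set (P × P)}
    (h : HasPosetCycle S) (hST : S ⊆ T) : HasPosetCycle T := by
  obtain ⟨p, hp, a, b, h1, h2, h3, h4⟩ := h
  exact ⟨p, hp, a, b, fun i hi => hST (h1 i hi), h2, h3, h4⟩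

/-- The complex `f(P)` of acyclic matchings on the Hasse diagram of a poset `P`:
vertices are covering pairs, faces are acyclic matchings. -/
def posetMatchingComplex (P : Type*) [PartialOrder P] : ASC (P × P) where
  faces := {s | s.Nonempty ∧ (∀ p ∈ s, p.1 ⋖ p.2) ∧
    (∀ p ∈ s, ∀ q ∈ s, p ≠ q → p.1 ≠ q.1 ∧ p.1 ≠ q.2 ∧ p.2 ≠ q.1 ∧ p.2 ≠ q.2) ∧
    ¬ HasPosetCycle (↑s : Set (P × P))}
  nonempty_of_mem h := h.1
  down_closed := by
    intro s t hs hts htne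
    refine ⟨htne, fun p hp => hs.2.1 p (hts hp),
      fun p hp q hq => hs.2.2.1 p (hts hp) q (hts hq), fun hc => hs.2.2.2 ?_⟩
    exact hc.mono (Finset.coe_subset.mpr hts)

end Posets


section MorseAux
open Finset

namespace MorseAux

variable {n : ℕ}

abbrev VV (n : ℕ) := WGV 0 1 n 0 0

def vc : VV n := Sum.inl 0
def va : VV n := Sum.inr (Sum.inl (Sum.inl 0))
def vm (i : Fin n) : VV n := Sum.inr (Sum.inl (Sum.inr (i, 0)))
def ve (i : Fin n) : VV n := Sum.inr (Sum.inl (Sum.inr (i, 1)))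

@[simp] lemma vc_ne_va : (vc : VV n) ≠ va := by simp [vc, va]
@[simp] lemma vc_ne_vm (i : Fin n) : (vc : VV n) ≠ vm i := by simp [vc, vm]
@[simp] lemma vc_ne_ve (i : Fin n) : (vc : VV n) ≠ ve i := by simp [vc, ve]
@[simp] lemma va_ne_vm (i : Fin n) : (va : VV n) ≠ vm i := by simp [va, vm]
@[simp] lemma va_ne_ve (i : Fin n) : (va : VV n) ≠ ve i := by simp [va, ve]
@[simp] lemma vm_ne_ve (i j : Fin n) : (vm i : VV n) ≠ ve j := by simp [vm, ve]
@[simp] lemma va_ne_vc : (va : VV n) ≠ vc := by simp [vc, va]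
@[simp] lemma vm_ne_vc (i : Fin n) : (vm i : VV n) ≠ vc := by simp [vc, vm]
@[simp] lemma ve_ne_vc (i : Fin n) : (ve i : VV n) ≠ vc := by simp [vc, ve]
@[simp] lemma vm_ne_va (i : Fin n) : (vm i : VV n) ≠ va := by simp [va, vm]
@[simp] lemma ve_ne_va (i : Fin n) : (ve i : VV n) ≠ va := by simp [va, ve]
@[simp] lemma ve_ne_vm (i j : Fin n) : (ve i : VV n) ≠ vm j := by simp [vm, ve]
@[simp] lemma vm_inj {i j : Fin n} : (vm i : VV n) = vm j ↔ i = j := by simp [vm]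
@[simp] lemma ve_inj {i j : Fin n} : (ve i : VV n) = ve j ↔ i = j := by simp [ve]

lemma fpair_eq_pair {α : Type*} [DecidableEq α] {x y z w : α} :
    ({x, y} : Finset α) = {z, w} ↔ x = z ∧ y = w ∨ x = w ∧ y = z := by
  rw [← Finset.coe_inj]
  push_cast
  exact Set.pair_eq_pair_iff

/-- The edges of the graph `S_{1,n}`. -/
lemma mem_wedgeGraph_iff {s : Finset (VV n)} :
    s ∈ (wedgeGraph 0 1 n 0 0).faces ↔ s.Nonempty ∧
      (s ⊆ ({vc, va} : Finset (VV n)) ∨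
        ∃ i, s ⊆ ({vc, vm i} : Finset (VV n)) ∨ s ⊆ ({vm i, ve i} : Finset (VV n))) := by
  constructor
  · rintro ⟨hne, e, he, hse⟩
    refine ⟨hne, ?_⟩
    rcases he with ⟨i, _⟩ | ⟨j, rfl⟩ | ⟨i, rfl⟩ | ⟨i, rfl⟩ | ⟨j, _⟩ | ⟨j, _⟩ | ⟨j, _⟩
    · exact Fin.elim0 i
    · left
      have : j = 0 := Subsingleton.elim _ _
      subst this
      exact hse
    · exact Or.inr ⟨i, Or.inl hse⟩
    · exact Or.inr ⟨i, Or.inr hse⟩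
    · exact Fin.elim0 j
    · exact Fin.elim0 j
    · exact Fin.elim0 j
  · rintro ⟨hne, h | ⟨i, h | h⟩⟩
    · exact ⟨hne, {vc, va}, Or.inr (Or.inl ⟨0, rfl⟩), h⟩
    · exact ⟨hne, {vc, vm i}, Or.inr (Or.inr (Or.inl ⟨i, rfl⟩)), h⟩
    · exact ⟨hne, {vm i, ve i}, Or.inr (Or.inr (Or.inr (Or.inl ⟨i, rfl⟩))), h⟩


abbrev PP (n : ℕ) := Finset (VV n) × Finset (VV n)

def pI1 : PP n := ({vc}, {vc, va})
def pI2 : PP n := ({va}, {vc, va})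
def pA (i : Fin n) : PP n := ({vc}, {vc, vm i})
def pB (i : Fin n) : PP n := ({vm i}, {vc, vm i})
def pC (i : Fin n) : PP n := ({vm i}, {vm i, ve i})
def pD (i : Fin n) : PP n := ({ve i}, {vm i, ve i})

/-- `p` is a valid (vertex, edge) incidence pair of `S_{1,n}`. -/
def Inc (p : PP n) : Prop :=
  p = pI1 ∨ p = pI2 ∨ (∃ i, p = pA i) ∨ (∃ i, p = pB i) ∨ (∃ i, p = pC i) ∨ (∃ i, p = pD i)

attribute [local simp] fpair_eq_pair

lemma Inc.card1 {p : PP n} (h : Inc p) : p.1.card = 1 := by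
  rcases h with rfl | rfl | ⟨i, rfl⟩ | ⟨i, rfl⟩ | ⟨i, rfl⟩ | ⟨i, rfl⟩ <;>
    simp [pI1, pI2, pA, pB, pC, pD]

lemma Inc.card2 {p : PP n} (h : Inc p) : p.2.card = 2 := by
  rcases h with rfl | rfl | ⟨i, rfl⟩ | ⟨i, rfl⟩ | ⟨i, rfl⟩ | ⟨i, rfl⟩ <;>
    · simp only [pI1, pI2, pA, pB, pC, pD]
      rw [Finset.card_pair (by simp)]

lemma Inc.sub {p : PP n} (h : Inc p) : p.1 ⊆ p.2 := by
  rcases h with rfl | rfl | ⟨i, rfl⟩ | ⟨i, rfl⟩ | ⟨i, rfl⟩ | ⟨i, rfl⟩ <;>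
    simp [pI1, pI2, pA, pB, pC, pD, Finset.singleton_subset_iff]

lemma Inc.fst_mem {p : PP n} (h : Inc p) : p.1 ∈ (wedgeGraph 0 1 n 0 0).faces := by
  rw [mem_wedgeGraph_iff]
  rcases h with rfl | rfl | ⟨i, rfl⟩ | ⟨i, rfl⟩ | ⟨i, rfl⟩ | ⟨i, rfl⟩
  · exact ⟨by simp [pI1], Or.inl (by simp [pI1, Finset.singleton_subset_iff])⟩
  · exact ⟨by simp [pI2], Or.inl (by simp [pI2, Finset.singleton_subset_iff])⟩
  · exact ⟨by simp [pA], Or.inr ⟨i, Or.inl (by simp [pA, Finset.singleton_subset_iff])⟩⟩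
  · exact ⟨by simp [pB], Or.inr ⟨i, Or.inl (by simp [pB, Finset.singleton_subset_iff])⟩⟩
  · exact ⟨by simp [pC], Or.inr ⟨i, Or.inr (by simp [pC, Finset.singleton_subset_iff])⟩⟩
  · exact ⟨by simp [pD], Or.inr ⟨i, Or.inr (by simp [pD, Finset.singleton_subset_iff])⟩⟩

lemma Inc.snd_mem {p : PP n} (h : Inc p) : p.2 ∈ (wedgeGraph 0 1 n 0 0).faces := by
  rw [mem_wedgeGraph_iff]
  rcases h with rfl | rfl | ⟨i, rfl⟩ | ⟨i, rfl⟩ | ⟨i, rfl⟩ | ⟨i, rfl⟩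
  · exact ⟨by simp [pI1], Or.inl (by simp [pI1])⟩
  · exact ⟨by simp [pI2], Or.inl (by simp [pI2])⟩
  · exact ⟨by simp [pA], Or.inr ⟨i, Or.inl (by simp [pA])⟩⟩
  · exact ⟨by simp [pB], Or.inr ⟨i, Or.inl (by simp [pB])⟩⟩
  · exact ⟨by simp [pC], Or.inr ⟨i, Or.inr (by simp [pC])⟩⟩
  · exact ⟨by simp [pD], Or.inr ⟨i, Or.inr (by simp [pD])⟩⟩

/-- classification of first components -/
lemma Inc.fst_cases {p : PP n} (h : Inc p) :
    p.1 = {vc} ∨ p.1 = {va} ∨ (∃ i, p.1 = {vm i}) ∨ (∃ i, p.1 = {ve i}) := by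
  rcases h with rfl | rfl | ⟨i, rfl⟩ | ⟨i, rfl⟩ | ⟨i, rfl⟩ | ⟨i, rfl⟩ <;>
    simp [pI1, pI2, pA, pB, pC, pD]

/-- classification of second components -/
lemma Inc.snd_cases {p : PP n} (h : Inc p) :
    p.2 = {vc, va} ∨ (∃ i, p.2 = {vc, vm i}) ∨ (∃ i, p.2 = {vm i, ve i}) := by
  rcases h with rfl | rfl | ⟨i, rfl⟩ | ⟨i, rfl⟩ | ⟨i, rfl⟩ | ⟨i, rfl⟩ <;>
    simp [pI1, pI2, pA, pB, pC, pD]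

lemma edge_of_va {p : PP n} (h : Inc p) (hm : va ∈ p.2) : p.2 = {vc, va} := by
  rcases h.snd_cases with h' | ⟨i, h'⟩ | ⟨i, h'⟩
  · exact h'
  · rw [h'] at hm; simp at hm
  · rw [h'] at hm; simp at hm

lemma edge_of_ve {p : PP n} (h : Inc p) {i : Fin n} (hm : ve i ∈ p.2) :
    p.2 = {vm i, ve i} := by
  rcases h.snd_cases with h' | ⟨j, h'⟩ | ⟨j, h'⟩
  · rw [h'] at hm; simp at hm
  · rw [h'] at hm; simp at hm
  · rw [h'] at hm ⊢
    simp only [Finset.mem_insert, Finset.mem_singleton] at hm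
    rcases hm with hm | hm
    · exact absurd hm (ve_ne_vm _ _)
    · rcases ve_inj.mp hm with rfl; rfl

lemma edge_of_vm {p : PP n} (h : Inc p) {i : Fin n} (hm : vm i ∈ p.2) :
    p.2 = {vc, vm i} ∨ p.2 = {vm i, ve i} := by
  rcases h.snd_cases with h' | ⟨j, h'⟩ | ⟨j, h'⟩
  · rw [h'] at hm; simp at hm
  · rw [h'] at hm ⊢
    simp only [Finset.mem_insert, Finset.mem_singleton] at hm
    rcases hm with hm | hm
    · exact absurd hm (vm_ne_vc _)
    · rcases vm_inj.mp hm with rfl; exact Or.inl rfl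
  · rw [h'] at hm ⊢
    simp only [Finset.mem_insert, Finset.mem_singleton] at hm
    rcases hm with hm | hm
    · rcases vm_inj.mp hm with rfl; exact Or.inr rfl
    · exact absurd hm (vm_ne_ve _ _)

lemma singleton_sub_pair {α : Type*} [DecidableEq α] {t : Finset α} {x y : α}
    (hs : t ⊆ ({x, y} : Finset α)) (hc : t.card = 1) : t = {x} ∨ t = {y} := by
  obtain ⟨z, rfl⟩ := Finset.card_eq_one.mp hc
  have := hs (Finset.mem_singleton_self z)
  simp only [Finset.mem_insert, Finset.mem_singleton] at this
  rcases this with rfl | rfl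
  · exact Or.inl rfl
  · exact Or.inr rfl

/-- Every matching of incidence pairs of the tree `S_{1,n}` is acyclic. -/
lemma no_closed_path {s : Finset (PP n)}
    (hInc : ∀ p ∈ s, Inc p)
    (hinj : ∀ p ∈ s, ∀ q ∈ s, p ≠ q → p.1 ≠ q.1 ∧ p.1 ≠ q.2 ∧ p.2 ≠ q.1 ∧ p.2 ≠ q.2) :
    ¬ hasClosedPath (↑s : Set (PP n)) := by
  rintro ⟨k, α, β, hk, hstep, hcl⟩
  have hmem : ∀ i < k, (α i, β i) ∈ s := fun i hi => (hstep i hi).1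
  have hIncp : ∀ i < k, Inc (α i, β i) := fun i hi => hInc _ (hmem i hi)
  -- distinct β's
  have L1 : ∀ i < k, ∀ j < k, β i = β j → α i ≠ α j → False := by
    intro i hi j hj hb ha
    have hne : (α i, β i) ≠ (α j, β j) := fun h => ha (congrArg Prod.fst h)
    exact (hinj _ (hmem i hi) _ (hmem j hj) hne).2.2.2 hb
  -- previous index
  have hprev : ∀ i < k, ∃ i', i' < k ∧ α i ⊆ β i' ∧ α i' ≠ α i ∧ (α i', β i') ∈ s := by
    intro i hi
    rcases Nat.eq_zero_or_pos i with rfl | hpos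
    · have hlt : k - 1 < k := Nat.sub_lt hk one_pos
      have heq : k - 1 + 1 = k := by omega
      have h1 := (hstep (k - 1) hlt).2.1
      have h2 := (hstep (k - 1) hlt).2.2.2
      rw [heq, hcl] at h1 h2
      exact ⟨k - 1, hlt, h1, fun h => h2 h.symm, hmem _ hlt⟩
    · have hlt : i - 1 < k := by omega
      have heq : i - 1 + 1 = i := by omega
      have h1 := (hstep (i - 1) hlt).2.1
      have h2 := (hstep (i - 1) hlt).2.2.2
      rw [heq] at h1 h2
      exact ⟨i - 1, hlt, h1, fun h => h2 h.symm, hmem _ hlt⟩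
  -- no α is a leaf
  have hnoleaf : ∀ j < k, α j ≠ {va} ∧ ∀ i : Fin n, α j ≠ {ve i} := by
    intro j hj
    obtain ⟨j', hj', hsub', hne', _⟩ := hprev j hj
    constructor
    · intro hα
      have h1 : β j = {vc, va} :=
        edge_of_va (hIncp j hj) ((hIncp j hj).sub (by rw [hα]; simp))
      have h2 : β j' = {vc, va} :=
        edge_of_va (hIncp j' hj') (hsub' (by rw [hα]; simp))
      exact L1 j hj j' hj' (h1.trans h2.symm) (fun h => hne' h.symm)
    · intro i hα
      have h1 : β j = {vm i, ve i} :=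
        edge_of_ve (hIncp j hj) ((hIncp j hj).sub (by rw [hα]; simp))
      have h2 : β j' = {vm i, ve i} :=
        edge_of_ve (hIncp j' hj') (hsub' (by rw [hα]; simp))
      exact L1 j hj j' hj' (h1.trans h2.symm) (fun h => hne' h.symm)
  -- k ≥ 2
  have hk2 : 2 ≤ k := by
    by_contra h
    interval_cases k
    · exact (hstep 0 hk).2.2.2 (by rw [hcl])
  -- find an index with α = {vm i}
  have hmid : ∀ j < k, α j = {vc} ∨ ∃ i, α j = {vm i} := by
    intro j hj
    rcases (hIncp j hj).fst_cases with h | h | h | ⟨i, h⟩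
    · exact Or.inl h
    · exact absurd h (hnoleaf j hj).1
    · exact Or.inr h
    · exact absurd h ((hnoleaf j hj).2 i)
  obtain ⟨j₀, hj₀, i, hα₀⟩ : ∃ j, j < k ∧ ∃ i, α j = {vm i} := by
    rcases hmid 0 hk with h0 | ⟨i, h0⟩
    · rcases hmid 1 (by omega) with h1 | ⟨i, h1⟩
      · exact absurd (h1.trans h0.symm) (hstep 0 hk).2.2.2
      · exact ⟨1, by omega, i, h1⟩
    · exact ⟨0, hk, i, h0⟩
  -- the contradiction
  obtain ⟨j', hj', hsub', hne', _⟩ := hprev j₀ hj₀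
  have hb0 : β j₀ = {vc, vm i} ∨ β j₀ = {vm i, ve i} :=
    edge_of_vm (hIncp j₀ hj₀) ((hIncp j₀ hj₀).sub (by rw [hα₀]; simp))
  have hb' : β j' = {vc, vm i} ∨ β j' = {vm i, ve i} :=
    edge_of_vm (hIncp j' hj') (hsub' (by rw [hα₀]; simp))
  have hbne : β j₀ ≠ β j' := fun h => L1 j₀ hj₀ j' hj' h (fun h' => hne' h'.symm)
  rcases hb0 with hb0 | hb0
  · -- then β j' = {vm i, ve i} and α j' = {ve i}: leaf contradiction
    have hb'2 : β j' = {vm i, ve i} := by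
      rcases hb' with h | h
      · exact absurd (hb0.trans h.symm) hbne
      · exact h
    have hsub2 : α j' ⊆ β j' := (hIncp j' hj').sub
    rw [hb'2] at hsub2
    rcases singleton_sub_pair hsub2 (hIncp j' hj').card1 with h | h
    · exact hne' (h.trans hα₀.symm)
    · exact (hnoleaf j' hj').2 i h
  · -- α (j₀+1) = {ve i}
    have hcard : (α (j₀ + 1)).card = 1 := by
      have h1 := (hstep j₀ hj₀).2.2.1
      rw [hb0, Finset.card_pair (vm_ne_ve i i)] at h1
      omega
    have hsub1 : α (j₀ + 1) ⊆ β j₀ := (hstep j₀ hj₀).2.1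
    rw [hb0] at hsub1
    have hne1 : α (j₀ + 1) ≠ {vm i} := hα₀ ▸ (hstep j₀ hj₀).2.2.2
    have hαe : α (j₀ + 1) = {ve i} := by
      rcases singleton_sub_pair hsub1 hcard with h | h
      · exact absurd h hne1
      · exact h
    rcases Nat.lt_or_ge (j₀ + 1) k with h | h
    · exact (hnoleaf (j₀ + 1) h).2 i hαe
    · have : j₀ + 1 = k := by omega
      rw [this, hcl] at hαe
      exact (hnoleaf 0 hk).2 i hαe


@[simp] lemma pI1_ne_pI2 : (pI1 : PP n) ≠ pI2 := by simp [pI1, pI2]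
@[simp] lemma pI1_ne_pA (i : Fin n) : (pI1 : PP n) ≠ pA i := by simp [pI1, pA, Prod.ext_iff]
@[simp] lemma pI1_ne_pB (i : Fin n) : (pI1 : PP n) ≠ pB i := by simp [pI1, pB, Prod.ext_iff]
@[simp] lemma pI1_ne_pC (i : Fin n) : (pI1 : PP n) ≠ pC i := by simp [pI1, pC, Prod.ext_iff]
@[simp] lemma pI1_ne_pD (i : Fin n) : (pI1 : PP n) ≠ pD i := by simp [pI1, pD, Prod.ext_iff]
@[simp] lemma pI2_ne_pA (i : Fin n) : (pI2 : PP n) ≠ pA i := by simp [pI2, pA, Prod.ext_iff]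
@[simp] lemma pI2_ne_pB (i : Fin n) : (pI2 : PP n) ≠ pB i := by simp [pI2, pB, Prod.ext_iff]
@[simp] lemma pI2_ne_pC (i : Fin n) : (pI2 : PP n) ≠ pC i := by simp [pI2, pC, Prod.ext_iff]
@[simp] lemma pI2_ne_pD (i : Fin n) : (pI2 : PP n) ≠ pD i := by simp [pI2, pD, Prod.ext_iff]
@[simp] lemma pA_ne_pB (i j : Fin n) : (pA i : PP n) ≠ pB j := by simp [pA, pB, Prod.ext_iff]
@[simp] lemma pA_ne_pC (i j : Fin n) : (pA i : PP n) ≠ pC j := by simp [pA, pC, Prod.ext_iff]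
@[simp] lemma pA_ne_pD (i j : Fin n) : (pA i : PP n) ≠ pD j := by simp [pA, pD, Prod.ext_iff]
@[simp] lemma pB_ne_pC (i j : Fin n) : (pB i : PP n) ≠ pC j := by simp [pB, pC, Prod.ext_iff]
@[simp] lemma pB_ne_pD (i j : Fin n) : (pB i : PP n) ≠ pD j := by simp [pB, pD, Prod.ext_iff]
@[simp] lemma pC_ne_pD (i j : Fin n) : (pC i : PP n) ≠ pD j := by simp [pC, pD, Prod.ext_iff]
@[simp] lemma pI2_ne_pI1 : (pI2 : PP n) ≠ pI1 := by simp [pI1, pI2]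
@[simp] lemma pA_ne_pI1 (i : Fin n) : (pA i : PP n) ≠ pI1 := (pI1_ne_pA i).symm
@[simp] lemma pB_ne_pI1 (i : Fin n) : (pB i : PP n) ≠ pI1 := (pI1_ne_pB i).symm
@[simp] lemma pC_ne_pI1 (i : Fin n) : (pC i : PP n) ≠ pI1 := (pI1_ne_pC i).symm
@[simp] lemma pD_ne_pI1 (i : Fin n) : (pD i : PP n) ≠ pI1 := (pI1_ne_pD i).symm
@[simp] lemma pA_ne_pI2 (i : Fin n) : (pA i : PP n) ≠ pI2 := (pI2_ne_pA i).symm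
@[simp] lemma pB_ne_pI2 (i : Fin n) : (pB i : PP n) ≠ pI2 := (pI2_ne_pB i).symm
@[simp] lemma pC_ne_pI2 (i : Fin n) : (pC i : PP n) ≠ pI2 := (pI2_ne_pC i).symm
@[simp] lemma pD_ne_pI2 (i : Fin n) : (pD i : PP n) ≠ pI2 := (pI2_ne_pD i).symm
@[simp] lemma pB_ne_pA (i j : Fin n) : (pB i : PP n) ≠ pA j := (pA_ne_pB j i).symm
@[simp] lemma pC_ne_pA (i j : Fin n) : (pC i : PP n) ≠ pA j := (pA_ne_pC j i).symm
@[simp] lemma pD_ne_pA (i j : Fin n) : (pD i : PP n) ≠ pA j := (pA_ne_pD j i).symm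
@[simp] lemma pC_ne_pB (i j : Fin n) : (pC i : PP n) ≠ pB j := (pB_ne_pC j i).symm
@[simp] lemma pD_ne_pB (i j : Fin n) : (pD i : PP n) ≠ pB j := (pB_ne_pD j i).symm
@[simp] lemma pD_ne_pC (i j : Fin n) : (pD i : PP n) ≠ pC j := (pC_ne_pD j i).symm
@[simp] lemma pA_inj {i j : Fin n} : (pA i : PP n) = pA j ↔ i = j := by simp [pA]
@[simp] lemma pB_inj {i j : Fin n} : (pB i : PP n) = pB j ↔ i = j := by simp [pB]
@[simp] lemma pC_inj {i j : Fin n} : (pC i : PP n) = pC j ↔ i = j := by simp [pC]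
@[simp] lemma pD_inj {i j : Fin n} : (pD i : PP n) = pD j ↔ i = j := by simp [pD]

/-- Faces of the Morse complex are exactly the "independent sets" of incidence
pairs (acyclicity is automatic since `S_{1,n}` is a tree). -/
lemma mem_MM_iff {s : Finset (PP n)} :
    s ∈ (MorseComplex (wedgeGraph 0 1 n 0 0)).faces ↔
      s.Nonempty ∧ (∀ p ∈ s, Inc p) ∧
      (∀ p ∈ s, ∀ q ∈ s, p ≠ q → p.1 ≠ q.1 ∧ p.1 ≠ q.2 ∧ p.2 ≠ q.1 ∧ p.2 ≠ q.2) := by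
  constructor
  · rintro ⟨hne, ⟨hm1, hm2⟩, hacyc⟩
    refine ⟨hne, ?_, ?_⟩
    · intro p hp
      obtain ⟨h1, h2, hsub, hcard⟩ := hm1 p (Finset.mem_coe.mpr hp)
      obtain ⟨hne2, he⟩ := mem_wedgeGraph_iff.mp h2
      have hc1 : 1 ≤ p.1.card :=
        Finset.card_pos.mpr ((wedgeGraph 0 1 n 0 0).nonempty_of_mem h1)
      rcases he with hsub2 | ⟨i, hsub2 | hsub2⟩
      · have hce : ({vc, va} : Finset (VV n)).card = 2 := Finset.card_pair (by simp)
        have hle : p.2.card ≤ 2 := hce ▸ Finset.card_le_card hsub2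
        have hp2 : p.2 = {vc, va} :=
          Finset.eq_of_subset_of_card_le hsub2 (by omega)
        rcases singleton_sub_pair (hp2 ▸ hsub) (by omega) with h | h
        · exact Or.inl (Prod.ext_iff.mpr ⟨h, hp2⟩)
        · exact Or.inr (Or.inl (Prod.ext_iff.mpr ⟨h, hp2⟩))
      · have hce : ({vc, vm i} : Finset (VV n)).card = 2 := Finset.card_pair (by simp)
        have hle : p.2.card ≤ 2 := hce ▸ Finset.card_le_card hsub2
        have hp2 : p.2 = {vc, vm i} :=
          Finset.eq_of_subset_of_card_le hsub2 (by omega)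
        rcases singleton_sub_pair (hp2 ▸ hsub) (by omega) with h | h
        · exact Or.inr (Or.inr (Or.inl ⟨i, Prod.ext_iff.mpr ⟨h, hp2⟩⟩))
        · exact Or.inr (Or.inr (Or.inr (Or.inl ⟨i, Prod.ext_iff.mpr ⟨h, hp2⟩⟩)))
      · have hce : ({vm i, ve i} : Finset (VV n)).card = 2 := Finset.card_pair (by simp)
        have hle : p.2.card ≤ 2 := hce ▸ Finset.card_le_card hsub2
        have hp2 : p.2 = {vm i, ve i} :=
          Finset.eq_of_subset_of_card_le hsub2 (by omega)
        rcases singleton_sub_pair (hp2 ▸ hsub) (by omega) with h | h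
        · exact Or.inr (Or.inr (Or.inr (Or.inr (Or.inl ⟨i, Prod.ext_iff.mpr ⟨h, hp2⟩⟩))))
        · exact Or.inr (Or.inr (Or.inr (Or.inr (Or.inr ⟨i, Prod.ext_iff.mpr ⟨h, hp2⟩⟩))))
    · intro p hp q hq hne'
      exact hm2 p (Finset.mem_coe.mpr hp) q (Finset.mem_coe.mpr hq) hne'
  · rintro ⟨hne, hInc, hinj⟩
    refine ⟨hne, ⟨⟨?_, ?_⟩, ?_⟩⟩
    · intro p hp
      have h := hInc p (Finset.mem_coe.mp hp)
      exact ⟨h.fst_mem, h.snd_mem, h.sub, by rw [h.card2, h.card1]⟩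
    · intro p hp q hq h
      exact hinj p (Finset.mem_coe.mp hp) q (Finset.mem_coe.mp hq) h
    · exact no_closed_path hInc hinj

lemma comp4 {p q : PP n} (hp : Inc p) (hq : Inc q) (h1 : p.1 ≠ q.1) (h2 : p.2 ≠ q.2) :
    p.1 ≠ q.1 ∧ p.1 ≠ q.2 ∧ p.2 ≠ q.1 ∧ p.2 ≠ q.2 := by
  refine ⟨h1, ?_, ?_, h2⟩
  · intro h; have hc := hp.card1; rw [h, hq.card2] at hc; omega
  · intro h; have hc := hp.card2; rw [h, hq.card1] at hc; omega

/-- separation data for `pI2` against any other incidence pair -/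
lemma pI2_sep {q : PP n} (hq : Inc q) (h1 : q ≠ pI1) (h2 : q ≠ pI2) :
    (pI2 : PP n).1 ≠ q.1 ∧ (pI2 : PP n).2 ≠ q.2 := by
  rcases hq with rfl | rfl | ⟨i, rfl⟩ | ⟨i, rfl⟩ | ⟨i, rfl⟩ | ⟨i, rfl⟩ <;>
    simp_all [pI1, pI2, pA, pB, pC, pD]

/-- separation data for `pB i` against incidence pairs other than `pA _`, `pB i`, `pC i` -/
lemma pB_sep {i : Fin n} {q : PP n} (hq : Inc q) (hA : ∀ j, q ≠ pA j)
    (hB : q ≠ pB i) (hC : q ≠ pC i) :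
    (pB i : PP n).1 ≠ q.1 ∧ (pB i : PP n).2 ≠ q.2 := by
  rcases hq with rfl | rfl | ⟨j, rfl⟩ | ⟨j, rfl⟩ | ⟨j, rfl⟩ | ⟨j, rfl⟩
  · simp [pI1, pB]
  · simp [pI2, pB]
  · exact absurd rfl (hA j)
  · have hij : i ≠ j := fun h => hB (by rw [h])
    simp [pB, hij, hij.symm]
  · have hij : i ≠ j := fun h => hC (by rw [h])
    simp [pB, pC, hij, hij.symm]
  · simp [pB, pD]


noncomputable section

/-- The signed coordinate map. -/
def Tf (x : PP n → ℝ) : Fin (n + 1) → ℝ := fun j =>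
  Fin.cases (x pI1 - (x pI2 + ∑ i, x (pA i)))
    (fun i => x (pB i) + x (pD i) - x (pC i)) j

@[simp] lemma Tf_zero (x : PP n → ℝ) :
    Tf x 0 = x pI1 - (x pI2 + ∑ i, x (pA i)) := rfl

@[simp] lemma Tf_succ (x : PP n → ℝ) (i : Fin n) :
    Tf x i.succ = x (pB i) + x (pD i) - x (pC i) := by
  simp [Tf]

/-- The "inverse" coordinate map: distribute signed masses onto incidence pairs. -/
def core (t : Fin (n + 1) → ℝ) (p : PP n) : ℝ :=
  (if p = pI1 then max (t 0) 0 else 0) + (if p = pI2 then max (-t 0) 0 else 0) +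
    ∑ i : Fin n, ((if p = pB i then max (t i.succ) 0 else 0) +
      (if p = pC i then max (-(t i.succ)) 0 else 0))

lemma core_nonneg (t : Fin (n + 1) → ℝ) (p : PP n) : 0 ≤ core t p := by
  refine add_nonneg (add_nonneg ?_ ?_) (Finset.sum_nonneg fun i _ => add_nonneg ?_ ?_) <;>
    · split
      · exact le_max_right _ _
      · exact le_refl 0

@[simp] lemma core_I1 (t : Fin (n + 1) → ℝ) : core t pI1 = max (t 0) 0 := by
  simp [core]

@[simp] lemma core_I2 (t : Fin (n + 1) → ℝ) : core t pI2 = max (-t 0) 0 := by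
  simp [core]

@[simp] lemma core_A (t : Fin (n + 1) → ℝ) (i : Fin n) : core t (pA i) = 0 := by
  simp [core]

@[simp] lemma core_D (t : Fin (n + 1) → ℝ) (i : Fin n) : core t (pD i) = 0 := by
  simp [core]

@[simp] lemma core_B (t : Fin (n + 1) → ℝ) (i : Fin n) :
    core t (pB i) = max (t i.succ) 0 := by
  simp [core, Finset.sum_ite_eq]

@[simp] lemma core_C (t : Fin (n + 1) → ℝ) (i : Fin n) :
    core t (pC i) = max (-(t i.succ)) 0 := by
  simp [core, Finset.sum_ite_eq]

lemma max_add_max_neg (u : ℝ) : max u 0 + max (-u) 0 = |u| := by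
  rcases le_total 0 u with h | h
  · rw [max_eq_left h, max_eq_right (by linarith), abs_of_nonneg h]; ring
  · rw [max_eq_right h, max_eq_left (by linarith), abs_of_nonpos h]; ring

lemma max_sub_max_neg (u : ℝ) : max u 0 - max (-u) 0 = u := by
  rcases le_total 0 u with h | h
  · rw [max_eq_left h, max_eq_right (by linarith)]; ring
  · rw [max_eq_right h, max_eq_left (by linarith)]; ring

lemma core_sum (t : Fin (n + 1) → ℝ) : ∑ p : PP n, core t p = ∑ j, |t j| := by
  unfold core
  rw [Finset.sum_add_distrib, Finset.sum_add_distrib, Finset.sum_comm]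
  simp only [Finset.sum_ite_eq', Finset.mem_univ, if_true, Finset.sum_add_distrib]
  rw [Fin.sum_univ_succ]
  simp only [← max_add_max_neg, Finset.sum_add_distrib]

lemma core_eq_zero {t : Fin (n + 1) → ℝ} {p : PP n}
    (h1 : p = pI1 → t 0 ≤ 0) (h2 : p = pI2 → 0 ≤ t 0)
    (h3 : ∀ i, p = pB i → t i.succ ≤ 0) (h4 : ∀ i, p = pC i → 0 ≤ t i.succ) :
    core t p = 0 := by
  unfold core
  have e1 : (if p = pI1 then max (t 0) 0 else 0) = 0 := by
    split_ifs with h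
    · rw [max_eq_right (h1 h)]
    · rfl
  have e2 : (if p = pI2 then max (-t 0) 0 else 0) = 0 := by
    split_ifs with h
    · rw [max_eq_right (by linarith [h2 h])]
    · rfl
  have e3 : ∀ i : Fin n, ((if p = pB i then max (t i.succ) 0 else 0) +
      (if p = pC i then max (-(t i.succ)) 0 else 0)) = 0 := by
    intro i
    have f1 : (if p = pB i then max (t i.succ) 0 else 0) = 0 := by
      split_ifs with h
      · rw [max_eq_right (h3 i h)]
      · rfl
    have f2 : (if p = pC i then max (-(t i.succ)) 0 else 0) = 0 := by
      split_ifs with h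
      · rw [max_eq_right (by linarith [h4 i h])]
      · rfl
    rw [f1, f2, add_zero]
  rw [e1, e2, Finset.sum_eq_zero fun i _ => e3 i]
  ring

lemma core_support {t : Fin (n + 1) → ℝ} {p : PP n} (h : core t p ≠ 0) :
    (p = pI1 ∧ 0 < t 0) ∨ (p = pI2 ∧ t 0 < 0) ∨
      (∃ i, p = pB i ∧ 0 < t i.succ) ∨ (∃ i, p = pC i ∧ t i.succ < 0) := by
  by_contra hcon
  push_neg at hcon
  obtain ⟨hc1, hc2, hc3, hc4⟩ := hcon
  exact h (core_eq_zero (fun h' => hc1 h') (fun h' => hc2 h')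
    (fun i h' => hc3 i h') (fun i h' => hc4 i h'))


/-- shorthand: being a face of the Morse complex of `S_{1,n}` -/
def IsFace (s : Finset (PP n)) : Prop :=
  s ∈ (MorseComplex (wedgeGraph 0 1 n 0 0)).faces

lemma IsFace.inc {s : Finset (PP n)} (hs : IsFace s) {p : PP n} (hp : p ∈ s) : Inc p :=
  (mem_MM_iff.mp hs).2.1 p hp

lemma IsFace.inj {s : Finset (PP n)} (hs : IsFace s) :
    ∀ p ∈ s, ∀ q ∈ s, p ≠ q → p.1 ≠ q.1 ∧ p.1 ≠ q.2 ∧ p.2 ≠ q.1 ∧ p.2 ≠ q.2 :=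
  (mem_MM_iff.mp hs).2.2

lemma IsFace.excl {s : Finset (PP n)} (hs : IsFace s) {p q : PP n} (hp : p ∈ s)
    (hne : q ≠ p) (h : q.1 = p.1 ∨ q.1 = p.2 ∨ q.2 = p.1 ∨ q.2 = p.2) : q ∉ s := by
  intro hq
  obtain ⟨a1, a2, a3, a4⟩ := hs.inj q hq p hp hne
  tauto

lemma flip4 {p q : PP n} (h : q.1 ≠ p.1 ∧ q.1 ≠ p.2 ∧ q.2 ≠ p.1 ∧ q.2 ≠ p.2) :
    p.1 ≠ q.1 ∧ p.1 ≠ q.2 ∧ p.2 ≠ q.1 ∧ p.2 ≠ q.2 :=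
  ⟨h.1.symm, h.2.2.1.symm, h.2.1.symm, h.2.2.2.symm⟩

section WithPoint

variable {x : PP n → ℝ} {s : Finset (PP n)}

lemma notx (hsupp : ∀ p, x p ≠ 0 → p ∈ s) {p : PP n} (hp : p ∉ s) : x p = 0 := by
  by_contra h
  exact hp (hsupp p h)

/-- ℓ¹-coordinate 0 of `Tf` -/
lemma habs0 (hs : IsFace s) (hsupp : ∀ p, x p ≠ 0 → p ∈ s) (hpos : ∀ p, 0 ≤ x p) :
    |Tf x 0| = x pI1 + (x pI2 + ∑ i, x (pA i)) := by
  by_cases hI1 : pI1 ∈ s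
  · have h2 : x pI2 = 0 :=
      notx hsupp (hs.excl hI1 pI2_ne_pI1 (Or.inr (Or.inr (Or.inr rfl))))
    have h3 : ∀ i, x (pA i) = 0 := fun i =>
      notx hsupp (hs.excl hI1 (pA_ne_pI1 i) (Or.inl rfl))
    rw [Tf_zero, h2, Finset.sum_eq_zero fun i _ => h3 i]
    rw [abs_of_nonneg (by have := hpos pI1; linarith)]
    ring
  · have h1 : x pI1 = 0 := notx hsupp hI1
    have hv : 0 ≤ x pI2 + ∑ i, x (pA i) :=
      add_nonneg (hpos _) (Finset.sum_nonneg fun i _ => hpos _)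
    rw [Tf_zero, h1, zero_sub, abs_neg, abs_of_nonneg hv]
    ring

/-- ℓ¹-coordinates `i+1` of `Tf` -/
lemma habsS (hs : IsFace s) (hsupp : ∀ p, x p ≠ 0 → p ∈ s) (hpos : ∀ p, 0 ≤ x p)
    (i : Fin n) : |Tf x i.succ| = (x (pB i) + x (pD i)) + x (pC i) := by
  by_cases hC : pC i ∈ s
  · have h1 : x (pB i) = 0 :=
      notx hsupp (hs.excl hC (pB_ne_pC i i) (Or.inl rfl))
    have h2 : x (pD i) = 0 :=
      notx hsupp (hs.excl hC (pD_ne_pC i i) (Or.inr (Or.inr (Or.inr rfl))))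
    rw [Tf_succ, h1, h2, abs_of_nonpos (by have := hpos (pC i); linarith)]
    ring
  · have h3 : x (pC i) = 0 := notx hsupp hC
    rw [Tf_succ, h3, abs_of_nonneg (by have := hpos (pB i); have := hpos (pD i); linarith)]
    ring

/-- all incidence pairs -/
def SF (n : ℕ) : Finset (PP n) :=
  insert pI1 (insert pI2 ((Finset.univ.image pA ∪ Finset.univ.image pB) ∪
    (Finset.univ.image pC ∪ Finset.univ.image pD)))

lemma mem_SF_of_Inc {p : PP n} (h : Inc p) : p ∈ SF n := by
  rcases h with rfl | rfl | ⟨i, rfl⟩ | ⟨i, rfl⟩ | ⟨i, rfl⟩ | ⟨i, rfl⟩ <;> simp [SF]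

lemma sum_SF (x : PP n → ℝ) :
    ∑ p ∈ SF n, x p = x pI1 + x pI2 +
      ((∑ i, x (pA i) + ∑ i, x (pB i)) + (∑ i, x (pC i) + ∑ i, x (pD i))) := by
  have dAB : Disjoint (Finset.univ.image (pA (n := n))) (Finset.univ.image pB) := by
    simp only [Finset.disjoint_left, Finset.mem_image]
    rintro p ⟨i, -, rfl⟩ ⟨j, -, hj⟩
    exact pB_ne_pA j i hj
  have dCD : Disjoint (Finset.univ.image (pC (n := n))) (Finset.univ.image pD) := by
    simp only [Finset.disjoint_left, Finset.mem_image]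
    rintro p ⟨i, -, rfl⟩ ⟨j, -, hj⟩
    exact pD_ne_pC j i hj
  have dbig : Disjoint ((Finset.univ.image (pA (n := n)) ∪ Finset.univ.image pB))
      ((Finset.univ.image pC ∪ Finset.univ.image pD)) := by
    simp only [Finset.disjoint_left, Finset.mem_union, Finset.mem_image]
    rintro p (⟨i, -, rfl⟩ | ⟨i, -, rfl⟩) (⟨j, -, hj⟩ | ⟨j, -, hj⟩)
    · exact pC_ne_pA j i hj
    · exact pD_ne_pA j i hj
    · exact pC_ne_pB j i hj
    · exact pD_ne_pB j i hj
  rw [SF, Finset.sum_insert (by simp), Finset.sum_insert (by simp),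
    Finset.sum_union dbig, Finset.sum_union dAB, Finset.sum_union dCD,
    Finset.sum_image (fun i _ j _ h => pA_inj.mp h),
    Finset.sum_image (fun i _ j _ h => pB_inj.mp h),
    Finset.sum_image (fun i _ j _ h => pC_inj.mp h),
    Finset.sum_image (fun i _ j _ h => pD_inj.mp h)]
  ring

/-- total ℓ¹ mass of `Tf x` is the total mass of `x`. -/
lemma sumabs (hs : IsFace s) (hsupp : ∀ p, x p ≠ 0 → p ∈ s) (hpos : ∀ p, 0 ≤ x p)
    (hsum : ∑ p, x p = 1) : ∑ j, |Tf x j| = 1 := by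
  have step : ∑ j, |Tf x j| = ∑ p ∈ SF n, x p := by
    rw [Fin.sum_univ_succ, habs0 hs hsupp hpos,
      Finset.sum_congr rfl fun i _ => habsS hs hsupp hpos i, sum_SF,
      Finset.sum_add_distrib, Finset.sum_add_distrib]
    ring
  rw [step, Finset.sum_subset (Finset.subset_univ _) fun p _ hp => by
    by_contra h
    exact hp (mem_SF_of_Inc (hs.inc (hsupp p h)))]
  exact hsum

lemma pos0 (hsupp : ∀ p, x p ≠ 0 → p ∈ s) (hpos : ∀ p, 0 ≤ x p)
    (h : 0 < Tf x 0) : pI1 ∈ s := by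
  have hv : 0 ≤ x pI2 + ∑ i, x (pA i) :=
    add_nonneg (hpos _) (Finset.sum_nonneg fun i _ => hpos _)
  rw [Tf_zero] at h
  exact hsupp _ (by intro h0; rw [h0] at h; linarith)

lemma neg0 (hs : IsFace s) (hsupp : ∀ p, x p ≠ 0 → p ∈ s) (hpos : ∀ p, 0 ≤ x p)
    (h : Tf x 0 < 0) : pI1 ∉ s := by
  intro hI1
  have h2 : x pI2 = 0 :=
    notx hsupp (hs.excl hI1 pI2_ne_pI1 (Or.inr (Or.inr (Or.inr rfl))))
  have h3 : ∀ i, x (pA i) = 0 := fun i =>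
    notx hsupp (hs.excl hI1 (pA_ne_pI1 i) (Or.inl rfl))
  rw [Tf_zero, h2, Finset.sum_eq_zero fun i _ => h3 i] at h
  have := hpos pI1
  linarith

lemma posS (hsupp : ∀ p, x p ≠ 0 → p ∈ s) (hpos : ∀ p, 0 ≤ x p) {i : Fin n}
    (h : 0 < Tf x i.succ) : pB i ∈ s ∨ pD i ∈ s := by
  rw [Tf_succ] at h
  have hC := hpos (pC i)
  by_cases hB : x (pB i) = 0
  · refine Or.inr (hsupp _ ?_)
    intro hD
    rw [hB, hD] at h
    linarith
  · exact Or.inl (hsupp _ hB)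

lemma negS (hpos : ∀ p, 0 ≤ x p) (hsupp : ∀ p, x p ≠ 0 → p ∈ s) {i : Fin n}
    (h : Tf x i.succ < 0) : pC i ∈ s := by
  rw [Tf_succ] at h
  have hB := hpos (pB i)
  have hD := hpos (pD i)
  exact hsupp _ (by intro h0; rw [h0] at h; linarith)

end WithPoint

/-! ### Face surgery -/

open scoped Classical in
def s1 (s : Finset (PP n)) : Finset (PP n) := if pI1 ∈ s then s else insert pI2 s

def rA (n : ℕ) : Finset (PP n) := Finset.univ.image pA

def sb (s : Finset (PP n)) : Finset (PP n) := s1 s \ rA n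

open scoped Classical in
def s2 (s : Finset (PP n)) : Finset (PP n) :=
  sb s ∪ (Finset.univ.filter (fun i => pD i ∈ s)).image pB

lemma s_sub_s1 (s : Finset (PP n)) : s ⊆ s1 s := by
  unfold s1
  split_ifs
  · exact le_refl s
  · exact Finset.subset_insert _ s

@[simp] lemma pI1_not_mem_rA : pI1 ∉ rA n := by simp [rA]
@[simp] lemma pI2_not_mem_rA : pI2 ∉ rA n := by simp [rA]
@[simp] lemma pB_not_mem_rA (i : Fin n) : pB i ∉ rA n := by simp [rA]
@[simp] lemma pC_not_mem_rA (i : Fin n) : pC i ∉ rA n := by simp [rA]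
@[simp] lemma pD_not_mem_rA (i : Fin n) : pD i ∉ rA n := by simp [rA]

lemma s1_face {s : Finset (PP n)} (hs : IsFace s) : IsFace (s1 s) := by
  unfold s1
  split_ifs with hI1
  · exact hs
  · obtain ⟨hne, hInc, hinj⟩ := mem_MM_iff.mp hs
    refine mem_MM_iff.mpr ⟨⟨pI2, Finset.mem_insert_self _ _⟩, ?_, ?_⟩
    · intro p hp
      rcases Finset.mem_insert.mp hp with rfl | hp
      · exact Or.inr (Or.inl rfl)
      · exact hInc p hp
    · intro p hp q hq hpq
      rcases Finset.mem_insert.mp hp with rfl | hp <;>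
        rcases Finset.mem_insert.mp hq with rfl | hq
      · exact absurd rfl hpq
      · have hq1 : q ≠ pI1 := fun h => hI1 (h ▸ hq)
        have hq2 : q ≠ pI2 := fun h => hpq h.symm
        obtain ⟨e1, e2⟩ := pI2_sep (hInc q hq) hq1 hq2
        exact comp4 (Or.inr (Or.inl rfl)) (hInc q hq) e1 e2
      · have hp1 : p ≠ pI1 := fun h => hI1 (h ▸ hp)
        have hp2 : p ≠ pI2 := hpq
        obtain ⟨e1, e2⟩ := pI2_sep (hInc p hp) hp1 hp2
        exact flip4 (comp4 (Or.inr (Or.inl rfl)) (hInc p hp) e1 e2)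
      · exact hinj p hp q hq hpq

lemma sb_nonempty {s : Finset (PP n)} (hs : IsFace s) : (sb s).Nonempty := by
  by_cases hI1 : pI1 ∈ s
  · exact ⟨pI1, Finset.mem_sdiff.mpr ⟨s_sub_s1 s hI1, pI1_not_mem_rA⟩⟩
  · refine ⟨pI2, Finset.mem_sdiff.mpr ⟨?_, pI2_not_mem_rA⟩⟩
    unfold s1
    rw [if_neg hI1]
    exact Finset.mem_insert_self _ _

lemma sb_face {s : Finset (PP n)} (hs : IsFace s) : IsFace (sb s) :=
  (MorseComplex (wedgeGraph 0 1 n 0 0)).down_closed (s1_face hs)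
    Finset.sdiff_subset (sb_nonempty hs)

lemma mem_s1_of_ne {s : Finset (PP n)} {q : PP n} (hq : q ∈ s1 s) (h2 : q ≠ pI2) :
    q ∈ s := by
  unfold s1 at hq
  split_ifs at hq with h
  · exact hq
  · exact (Finset.mem_insert.mp hq).resolve_left h2

lemma s2_face {s : Finset (PP n)} (hs : IsFace s) : IsFace (s2 s) := by
  classical
  obtain ⟨hne, hInc, hinj⟩ := mem_MM_iff.mp (sb_face hs)
  have hBsep : ∀ (i : Fin n), pD i ∈ s → ∀ q ∈ sb s, q ≠ pB i →
      (pB i).1 ≠ q.1 ∧ (pB i).2 ≠ q.2 := by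
    intro i hD q hq hqB
    have hqA : ∀ j, q ≠ pA j := by
      intro j h
      have := (Finset.mem_sdiff.mp hq).2
      rw [h] at this
      exact this (by simp [rA])
    have hqC : q ≠ pC i := by
      intro h
      have hqs : pC i ∈ s := mem_s1_of_ne (h ▸ (Finset.mem_sdiff.mp hq).1) (by simp)
      exact hs.excl hD (pC_ne_pD i i) (Or.inr (Or.inr (Or.inr rfl))) hqs
    exact pB_sep (hInc q hq) hqA (fun h => hqB h) hqC
  refine mem_MM_iff.mpr ⟨hne.mono Finset.subset_union_left, ?_, ?_⟩
  · intro p hp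
    rcases Finset.mem_union.mp hp with hp | hp
    · exact hInc p hp
    · obtain ⟨i, -, rfl⟩ := Finset.mem_image.mp hp
      exact Or.inr (Or.inr (Or.inr (Or.inl ⟨i, rfl⟩)))
  · intro p hp q hq hpq
    rcases Finset.mem_union.mp hp with hp | hp <;>
      rcases Finset.mem_union.mp hq with hq | hq
    · exact hinj p hp q hq hpq
    · obtain ⟨i, hi, rfl⟩ := Finset.mem_image.mp hq
      have hD : pD i ∈ s := (Finset.mem_filter.mp hi).2
      obtain ⟨e1, e2⟩ := hBsep i hD p hp hpq
      exact flip4 (comp4 (Or.inr (Or.inr (Or.inr (Or.inl ⟨i, rfl⟩)))) (hInc p hp) e1 e2)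
    · obtain ⟨i, hi, rfl⟩ := Finset.mem_image.mp hp
      have hD : pD i ∈ s := (Finset.mem_filter.mp hi).2
      obtain ⟨e1, e2⟩ := hBsep i hD q hq (fun h => hpq h.symm)
      exact comp4 (Or.inr (Or.inr (Or.inr (Or.inl ⟨i, rfl⟩)))) (hInc q hq) e1 e2
    · obtain ⟨i, hi, rfl⟩ := Finset.mem_image.mp hp
      obtain ⟨j, hj, rfl⟩ := Finset.mem_image.mp hq
      have hij : i ≠ j := fun h => hpq (by rw [h])
      refine comp4 (Or.inr (Or.inr (Or.inr (Or.inl ⟨i, rfl⟩))))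
        (Or.inr (Or.inr (Or.inr (Or.inl ⟨j, rfl⟩)))) ?_ ?_
      · simp [pB, hij]
      · simp [pB, Prod.ext_iff, hij, hij.symm]


open scoped Classical in
/-- move all the `pA` mass to `pI2` -/
def rfun (x : PP n → ℝ) (p : PP n) : ℝ :=
  x p + (if p = pI2 then ∑ i, x (pA i) else 0) - (if p ∈ rA n then x p else 0)

section RQ

variable {x : PP n → ℝ} {s : Finset (PP n)}

lemma rfun_nonneg (hpos : ∀ p, 0 ≤ x p) (p : PP n) : 0 ≤ rfun x p := by
  have h1 : 0 ≤ ∑ i, x (pA i) := Finset.sum_nonneg fun i _ => hpos _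
  have h2 := hpos p
  unfold rfun
  split_ifs <;> linarith

lemma rfun_sum (x : PP n → ℝ) : ∑ p, rfun x p = ∑ p, x p := by
  classical
  unfold rfun
  rw [Finset.sum_sub_distrib, Finset.sum_add_distrib, Finset.sum_ite_eq',
    Finset.sum_ite_mem, Finset.univ_inter]
  rw [show (rA n : Finset (PP n)) = Finset.univ.image pA from rfl,
    Finset.sum_image (f := x) (g := pA) (fun i _ j _ h => pA_inj.mp h)]
  simp

lemma rfun_A (x : PP n → ℝ) {p : PP n} (hp : p ∈ rA n) : rfun x p = 0 := by
  obtain ⟨i, -, rfl⟩ := Finset.mem_image.mp hp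
  unfold rfun
  rw [if_pos hp, if_neg (pA_ne_pI2 i)]
  ring

lemma rfun_I2 (x : PP n → ℝ) : rfun x pI2 = x pI2 + ∑ i, x (pA i) := by
  unfold rfun
  rw [if_pos rfl, if_neg pI2_not_mem_rA]
  ring

lemma rfun_other {p : PP n} (x : PP n → ℝ) (h2 : p ≠ pI2) (hA : p ∉ rA n) :
    rfun x p = x p := by
  unfold rfun
  rw [if_neg h2, if_neg hA]
  ring

/-- support of `rfun x` is in `sb s` -/
lemma rfun_supp (hs : IsFace s) (hsupp : ∀ p, x p ≠ 0 → p ∈ s)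
    (hpos : ∀ p, 0 ≤ x p) (p : PP n) (hp : rfun x p ≠ 0) : p ∈ sb s := by
  by_cases hpA : p ∈ rA n
  · exact absurd (rfun_A x hpA) hp
  by_cases hp2 : p = pI2
  · subst hp2
    rw [rfun_I2] at hp
    have hI1 : pI1 ∉ s := by
      intro hI1
      have h2 : x pI2 = 0 :=
        notx hsupp (hs.excl hI1 pI2_ne_pI1 (Or.inr (Or.inr (Or.inr rfl))))
      have h3 : ∀ i, x (pA i) = 0 := fun i =>
        notx hsupp (hs.excl hI1 (pA_ne_pI1 i) (Or.inl rfl))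
      rw [h2, Finset.sum_eq_zero fun i _ => h3 i] at hp
      simp at hp
    refine Finset.mem_sdiff.mpr ⟨?_, pI2_not_mem_rA⟩
    unfold s1
    rw [if_neg hI1]
    exact Finset.mem_insert_self _ _
  · rw [rfun_other x hp2 hpA] at hp
    exact Finset.mem_sdiff.mpr ⟨s_sub_s1 s (hsupp p hp), hpA⟩

/-- support of `core (Tf x)` is in `s2 s` -/
lemma qfun_supp (hs : IsFace s) (hsupp : ∀ p, x p ≠ 0 → p ∈ s)
    (hpos : ∀ p, 0 ≤ x p) (p : PP n) (hp : core (Tf x) p ≠ 0) : p ∈ s2 s := by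
  classical
  rcases core_support hp with ⟨rfl, h⟩ | ⟨rfl, h⟩ | ⟨i, rfl, h⟩ | ⟨i, rfl, h⟩
  · exact Finset.mem_union_left _ (Finset.mem_sdiff.mpr
      ⟨s_sub_s1 s (pos0 hsupp hpos h), pI1_not_mem_rA⟩)
  · have hI1 : pI1 ∉ s := neg0 hs hsupp hpos h
    refine Finset.mem_union_left _ (Finset.mem_sdiff.mpr ⟨?_, pI2_not_mem_rA⟩)
    unfold s1
    rw [if_neg hI1]
    exact Finset.mem_insert_self _ _
  · rcases posS hsupp hpos h with hB | hD
    · exact Finset.mem_union_left _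
        (Finset.mem_sdiff.mpr ⟨s_sub_s1 s hB, pB_not_mem_rA i⟩)
    · exact Finset.mem_union_right _ (Finset.mem_image.mpr
        ⟨i, Finset.mem_filter.mpr ⟨Finset.mem_univ i, hD⟩, rfl⟩)
  · exact Finset.mem_union_left _ (Finset.mem_sdiff.mpr
      ⟨s_sub_s1 s (negS hpos hsupp h), pC_not_mem_rA i⟩)

/-- `Tf` is unchanged by `rfun` -/
lemma Tf_rfun (x : PP n → ℝ) : Tf (rfun x) = Tf x := by
  classical
  funext j
  induction j using Fin.cases with
  | zero =>
      rw [Tf_zero, Tf_zero, rfun_I2,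
        rfun_other x (by simp) pI1_not_mem_rA,
        Finset.sum_eq_zero fun i _ => rfun_A x (by simp [rA])]
      ring
  | succ i =>
      rw [Tf_succ, Tf_succ,
        rfun_other x (by simp) (pB_not_mem_rA i),
        rfun_other x (by simp) (pD_not_mem_rA i),
        rfun_other x (by simp) (pC_not_mem_rA i)]

end RQ


/-! ### The maps -/

section Topology

/-- the realization of the Morse complex of `S_{1,n}` -/
abbrev XX (n : ℕ) := ASC.realization (MorseComplex (wedgeGraph 0 1 n 0 0))

def TE (x : PP n → ℝ) : EuclideanSpace ℝ (Fin (n + 1)) :=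
  (EuclideanSpace.equiv (Fin (n + 1)) ℝ).symm (Tf x)

@[simp] lemma TE_apply (x : PP n → ℝ) (j : Fin (n + 1)) : TE x j = Tf x j := rfl

lemma xface (x : XX n) : ∃ s, IsFace s ∧ ∀ p, x.1 p ≠ 0 → p ∈ s := by
  obtain ⟨s, hs, hsupp⟩ := x.2.2.2
  exact ⟨s, hs, hsupp⟩

lemma sumabs_x (x : XX n) : ∑ j, |Tf x.1 j| = 1 := by
  obtain ⟨s, hs, hsupp⟩ := xface x
  exact sumabs hs hsupp x.2.1 x.2.2.1

lemma TE_norm_pos (x : XX n) : 0 < ‖TE x.1‖ := by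
  rcases eq_or_lt_of_le (norm_nonneg (TE x.1)) with h | h
  · exfalso
    have h0 : TE x.1 = 0 := by
      rw [← norm_eq_zero]; exact h.symm
    have : ∀ j, Tf x.1 j = 0 := by
      intro j
      rw [← TE_apply, h0]
      rfl
    have h1 := sumabs_x x
    rw [Finset.sum_eq_zero (fun j _ => by rw [this j, abs_zero])] at h1
    norm_num at h1
  · exact h

/-- ℓ¹ norm on Euclidean space -/
def Nl1 (u : EuclideanSpace ℝ (Fin (n + 1))) : ℝ := ∑ j, |u j|

lemma Nl1_pos (u : Sph n) : 0 < Nl1 u.1 := by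
  have hn : ‖u.1‖ = 1 := mem_sphere_zero_iff_norm.mp u.2
  rcases eq_or_lt_of_le (Finset.sum_nonneg fun j (_ : j ∈ Finset.univ) =>
    abs_nonneg (u.1 j)) with h | h
  · exfalso
    have hz : ∀ j, u.1 j = 0 := by
      intro j
      have := (Finset.sum_eq_zero_iff_of_nonneg
        (fun j _ => abs_nonneg (u.1 j))).mp h.symm j (Finset.mem_univ j)
      exact abs_eq_zero.mp this
    have : u.1 = 0 := by
      ext j
      exact hz j
    rw [this] at hn
    simp at hn
  · exact h

lemma IncI1 : Inc (pI1 : PP n) := Or.inl rfl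
lemma IncI2 : Inc (pI2 : PP n) := Or.inr (Or.inl rfl)
lemma IncB (i : Fin n) : Inc (pB i : PP n) := Or.inr (Or.inr (Or.inr (Or.inl ⟨i, rfl⟩)))
lemma IncC (i : Fin n) : Inc (pC i : PP n) := Or.inr (Or.inr (Or.inr (Or.inr (Or.inl ⟨i, rfl⟩))))

open scoped Classical in
lemma core_filter_face (t : Fin (n + 1) → ℝ) (hne : ∃ p : PP n, core t p ≠ 0) :
    IsFace ((Finset.univ : Finset (PP n)).filter (fun p => core t p ≠ 0)) := by
  obtain ⟨p₀, hp₀⟩ := hne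
  refine mem_MM_iff.mpr ⟨⟨p₀, Finset.mem_filter.mpr ⟨Finset.mem_univ _, hp₀⟩⟩, ?_, ?_⟩
  · intro p hp
    rcases core_support (Finset.mem_filter.mp hp).2 with
      ⟨rfl, -⟩ | ⟨rfl, -⟩ | ⟨i, rfl, -⟩ | ⟨i, rfl, -⟩
    · exact IncI1
    · exact IncI2
    · exact IncB i
    · exact IncC i
  · intro p hp q hq hpq
    rcases core_support (Finset.mem_filter.mp hp).2 with
      ⟨rfl, h1⟩ | ⟨rfl, h1⟩ | ⟨i, rfl, h1⟩ | ⟨i, rfl, h1⟩ <;>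
      rcases core_support (Finset.mem_filter.mp hq).2 with
        ⟨rfl, h2⟩ | ⟨rfl, h2⟩ | ⟨j, rfl, h2⟩ | ⟨j, rfl, h2⟩
    · exact absurd rfl hpq
    · linarith
    · exact comp4 IncI1 (IncB j) (by simp [pI1, pB]) (by simp [pI1, pB])
    · exact comp4 IncI1 (IncC j) (by simp [pI1, pC]) (by simp [pI1, pC])
    · linarith
    · exact absurd rfl hpq
    · exact comp4 IncI2 (IncB j) (by simp [pI2, pB]) (by simp [pI2, pB])
    · exact comp4 IncI2 (IncC j) (by simp [pI2, pC]) (by simp [pI2, pC])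
    · exact comp4 (IncB i) IncI1 (by simp [pI1, pB]) (by simp [pI1, pB])
    · exact comp4 (IncB i) IncI2 (by simp [pI2, pB]) (by simp [pI2, pB])
    · have hij : i ≠ j := fun h => hpq (by rw [h])
      exact comp4 (IncB i) (IncB j) (by simp [pB, hij]) (by simp [pB, hij])
    · rcases eq_or_ne i j with rfl | hij
      · linarith
      · exact comp4 (IncB i) (IncC j) (by simp [pB, pC, hij]) (by simp [pB, pC])
    · exact comp4 (IncC i) IncI1 (by simp [pI1, pC]) (by simp [pI1, pC])
    · exact comp4 (IncC i) IncI2 (by simp [pI2, pC]) (by simp [pI2, pC])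
    · rcases eq_or_ne i j with rfl | hij
      · linarith
      · exact comp4 (IncC i) (IncB j) (by simp [pB, pC, hij]) (by simp [pB, pC])
    · have hij : i ≠ j := fun h => hpq (by rw [h])
      exact comp4 (IncC i) (IncC j) (by simp [pC, hij]) (by simp [pC, hij])

/-- continuity helpers -/
lemma cont_coord (p : PP n) : Continuous (fun x : XX n => x.1 p) :=
  (continuous_apply p).comp continuous_subtype_val

lemma cont_Tf (j : Fin (n + 1)) : Continuous (fun x : XX n => Tf x.1 j) := by
  induction j using Fin.cases with
  | zero =>
      exact (cont_coord pI1).sub ((cont_coord pI2).add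
        (continuous_finset_sum _ fun i _ => cont_coord (pA i)))
  | succ i =>
      simp only [Tf_succ]
      exact ((cont_coord (pB i)).add (cont_coord (pD i))).sub (cont_coord (pC i))

lemma cont_TE : Continuous (fun x : XX n => TE x.1) :=
  (EuclideanSpace.equiv (Fin (n + 1)) ℝ).symm.continuous.comp (continuous_pi cont_Tf)

lemma cont_ite {α : Type*} [TopologicalSpace α] (P : Prop) [Decidable P]
    (f : α → ℝ) (hf : Continuous f) :
    Continuous (fun u => if P then f u else 0) := by
  by_cases h : P
  · simpa [h] using hf
  · simp only [h, if_false]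
    exact continuous_const

/-- the map realization → sphere -/
noncomputable def Fmap (n : ℕ) : C(XX n, Sph n) where
  toFun x := ⟨‖TE x.1‖⁻¹ • TE x.1, by
    rw [mem_sphere_zero_iff_norm, norm_smul, norm_inv, norm_norm]
    exact inv_mul_cancel₀ (ne_of_gt (TE_norm_pos x))⟩
  continuous_toFun := by
    apply Continuous.subtype_mk
    exact ((cont_TE.norm).inv₀ (fun x => ne_of_gt (TE_norm_pos x))).smul cont_TE

/-- the map sphere → realization -/
noncomputable def gmap (n : ℕ) : C(Sph n, XX n) where
  toFun u := ⟨core (fun j => u.1 j / Nl1 u.1), by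
    constructor
    · exact fun p => core_nonneg _ p
    constructor
    · rw [core_sum]
      have hN := Nl1_pos u
      have : ∀ j, |u.1 j / Nl1 u.1| = |u.1 j| / Nl1 u.1 := fun j => by
        rw [abs_div, abs_of_pos hN]
      rw [Finset.sum_congr rfl fun j _ => this j, ← Finset.sum_div]
      exact div_self (ne_of_gt hN)
    · classical
      have hne : ∃ p : PP n, core (fun j => u.1 j / Nl1 u.1) p ≠ 0 := by
        by_contra h
        push_neg at h
        have := core_sum (n := n) (fun j => u.1 j / Nl1 u.1)
        rw [Finset.sum_eq_zero fun p _ => h p] at this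
        have hN := Nl1_pos u
        have h2 : ∀ j, |u.1 j / Nl1 u.1| = |u.1 j| / Nl1 u.1 := fun j => by
          rw [abs_div, abs_of_pos hN]
        rw [Finset.sum_congr rfl fun j _ => h2 j, ← Finset.sum_div] at this
        have : Nl1 u.1 / Nl1 u.1 = 0 := this.symm
        rw [div_self (ne_of_gt hN)] at this
        norm_num at this
      exact ⟨_, core_filter_face _ hne,
        fun p hp => Finset.mem_filter.mpr ⟨Finset.mem_univ _, hp⟩⟩⟩
  continuous_toFun := by
    apply Continuous.subtype_mk
    apply continuous_pi
    intro p
    have hcoord : ∀ j : Fin (n + 1), Continuous (fun u : Sph n => u.1 j) :=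
      fun j => (continuous_apply j).comp
        ((EuclideanSpace.equiv (Fin (n + 1)) ℝ).continuous.comp continuous_subtype_val)
    have hN : Continuous (fun u : Sph n => Nl1 u.1) :=
      continuous_finset_sum _ fun j _ => (hcoord j).abs
    have ht : ∀ j : Fin (n + 1), Continuous (fun u : Sph n => u.1 j / Nl1 u.1) :=
      fun j => (hcoord j).div hN (fun u => ne_of_gt (Nl1_pos u))
    unfold core
    refine Continuous.add (Continuous.add ?_ ?_) (continuous_finset_sum _ fun i _ =>
      Continuous.add ?_ ?_)
    · exact cont_ite _ _ ((ht 0).max continuous_const)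
    · exact cont_ite _ _ ((ht 0).neg.max continuous_const)
    · exact cont_ite _ _ ((ht i.succ).max continuous_const)
    · exact cont_ite _ _ ((ht i.succ).neg.max continuous_const)


lemma Tf_core (t : Fin (n + 1) → ℝ) : Tf (core t) = t := by
  funext j
  induction j using Fin.cases with
  | zero =>
      rw [Tf_zero, core_I1, core_I2, Finset.sum_eq_zero fun i (_ : i ∈ Finset.univ) =>
        core_A t i, add_zero, max_sub_max_neg]
  | succ i =>
      rw [Tf_succ, core_B, core_D, core_C, add_zero, max_sub_max_neg]

lemma Fg_id (u : Sph n) : (Fmap n) ((gmap n) u) = u := by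
  apply Subtype.ext
  have hN := Nl1_pos u
  show ‖TE (core (fun j => u.1 j / Nl1 u.1))‖⁻¹ • TE (core (fun j => u.1 j / Nl1 u.1)) = u.1
  have hTE : TE (core (fun j => u.1 j / Nl1 u.1)) = (Nl1 u.1)⁻¹ • u.1 := by
    ext j
    rw [TE_apply, Tf_core, PiLp.smul_apply, smul_eq_mul, div_eq_inv_mul]
  rw [hTE, norm_smul, norm_inv, Real.norm_eq_abs, abs_of_pos hN,
    mem_sphere_zero_iff_norm.mp u.2, mul_one, smul_smul, inv_inv,
    mul_inv_cancel₀ (ne_of_gt hN), one_smul]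

lemma gF_eq (x : XX n) : ((gmap n) ((Fmap n) x)).1 = core (Tf x.1) := by
  show core (fun j => ((Fmap n) x).1 j / Nl1 ((Fmap n) x).1) = core (Tf x.1)
  have hT := TE_norm_pos x
  have hcoord : ∀ j, ((Fmap n) x).1 j = ‖TE x.1‖⁻¹ * Tf x.1 j := by
    intro j
    show (‖TE x.1‖⁻¹ • TE x.1) j = _
    rw [PiLp.smul_apply, smul_eq_mul, TE_apply]
  have hNF : Nl1 ((Fmap n) x).1 = ‖TE x.1‖⁻¹ := by
    unfold Nl1
    rw [Finset.sum_congr rfl fun j (_ : j ∈ Finset.univ) => by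
      rw [hcoord j, abs_mul, abs_of_pos (inv_pos.mpr hT)],
      ← Finset.mul_sum, sumabs_x x, mul_one]
  have hc : (fun j => ((Fmap n) x).1 j / Nl1 ((Fmap n) x).1) = Tf x.1 := by
    funext j
    rw [hcoord j, hNF]
    field_simp
  rw [hc]

lemma cont_rfun (p : PP n) : Continuous (fun x : XX n => rfun x.1 p) := by
  unfold rfun
  exact ((cont_coord p).add (cont_ite _ _
    (continuous_finset_sum _ fun i _ => cont_coord (pA i)))).sub
    (cont_ite _ _ (cont_coord p))

lemma cont_qfun (p : PP n) : Continuous (fun x : XX n => core (Tf x.1) p) := by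
  unfold core
  refine Continuous.add (Continuous.add ?_ ?_) (continuous_finset_sum _ fun i _ =>
    Continuous.add ?_ ?_)
  · exact cont_ite _ _ ((cont_Tf 0).max continuous_const)
  · exact cont_ite _ _ ((cont_Tf 0).neg.max continuous_const)
  · exact cont_ite _ _ ((cont_Tf i.succ).max continuous_const)
  · exact cont_ite _ _ ((cont_Tf i.succ).neg.max continuous_const)

/-- the A-mass-moving retraction as a self-map of the realization -/
noncomputable def Rmap (n : ℕ) : C(XX n, XX n) where
  toFun x := ⟨rfun x.1, fun p => rfun_nonneg x.2.1 p,
    by rw [rfun_sum]; exact x.2.2.1, by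
      obtain ⟨s, hs, hsupp⟩ := xface x
      exact ⟨sb s, sb_face hs, fun p hp => rfun_supp hs hsupp x.2.1 p hp⟩⟩
  continuous_toFun := by
    apply Continuous.subtype_mk
    exact continuous_pi fun p => cont_rfun p

/-- first homotopy: from the identity to `Rmap`, along straight lines -/
noncomputable def H1 (n : ℕ) :
    ContinuousMap.Homotopy (ContinuousMap.id (XX n)) (Rmap n) where
  toFun q := ⟨fun p => (1 - (q.1 : ℝ)) * q.2.1 p + (q.1 : ℝ) * rfun q.2.1 p, by
    refine ⟨?_, ?_, ?_⟩
    · intro p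
      have h1 : (0:ℝ) ≤ q.1 := q.1.2.1
      have h2 : (q.1 : ℝ) ≤ 1 := q.1.2.2
      exact add_nonneg (mul_nonneg (by linarith) (q.2.2.1 p))
        (mul_nonneg h1 (rfun_nonneg q.2.2.1 p))
    · rw [Finset.sum_add_distrib, ← Finset.mul_sum, ← Finset.mul_sum, rfun_sum,
        q.2.2.2.1]
      ring
    · obtain ⟨s, hs, hsupp⟩ := xface q.2
      refine ⟨s1 s, s1_face hs, ?_⟩
      intro p hp
      by_cases hx : q.2.1 p = 0
      · have hr : rfun q.2.1 p ≠ 0 := by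
          intro h
          apply hp
          simp [hx, h]
        exact Finset.sdiff_subset (rfun_supp hs hsupp q.2.2.1 p hr)
      · exact s_sub_s1 s (hsupp p hx)⟩
  continuous_toFun := by
    apply Continuous.subtype_mk
    refine continuous_pi fun p => Continuous.add (Continuous.mul ?_ ?_)
      (Continuous.mul ?_ ?_)
    · exact continuous_const.sub (continuous_subtype_val.comp continuous_fst)
    · exact (cont_coord p).comp continuous_snd
    · exact continuous_subtype_val.comp continuous_fst
    · exact (cont_rfun p).comp continuous_snd
  map_zero_left x := by
    apply Subtype.ext
    funext p
    simp
  map_one_left x := by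
    apply Subtype.ext
    funext p
    simp [Rmap]

/-- second homotopy: from `Rmap` to `gmap ∘ Fmap`, along straight lines -/
noncomputable def H2 (n : ℕ) :
    ContinuousMap.Homotopy (Rmap n) ((gmap n).comp (Fmap n)) where
  toFun q := ⟨fun p => (1 - (q.1 : ℝ)) * rfun q.2.1 p + (q.1 : ℝ) * core (Tf q.2.1) p, by
    refine ⟨?_, ?_, ?_⟩
    · intro p
      have h1 : (0:ℝ) ≤ q.1 := q.1.2.1
      have h2 : (q.1 : ℝ) ≤ 1 := q.1.2.2
      exact add_nonneg (mul_nonneg (by linarith) (rfun_nonneg q.2.2.1 p))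
        (mul_nonneg h1 (core_nonneg _ p))
    · rw [Finset.sum_add_distrib, ← Finset.mul_sum, ← Finset.mul_sum, rfun_sum,
        q.2.2.2.1, core_sum, sumabs_x q.2]
      ring
    · obtain ⟨s, hs, hsupp⟩ := xface q.2
      refine ⟨s2 s, s2_face hs, ?_⟩
      intro p hp
      by_cases hx : rfun q.2.1 p = 0
      · have hr : core (Tf q.2.1) p ≠ 0 := by
          intro h
          apply hp
          simp [hx, h]
        exact qfun_supp hs hsupp q.2.2.1 p hr
      · exact Finset.mem_union_left _ (rfun_supp hs hsupp q.2.2.1 p hx)⟩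
  continuous_toFun := by
    apply Continuous.subtype_mk
    refine continuous_pi fun p => Continuous.add (Continuous.mul ?_ ?_)
      (Continuous.mul ?_ ?_)
    · exact continuous_const.sub (continuous_subtype_val.comp continuous_fst)
    · exact (cont_rfun p).comp continuous_snd
    · exact continuous_subtype_val.comp continuous_fst
    · exact (cont_qfun p).comp continuous_snd
  map_zero_left x := by
    apply Subtype.ext
    funext p
    simp [Rmap]
  map_one_left x := by
    apply Subtype.ext
    rw [ContinuousMap.comp_apply, gF_eq]
    funext p
    simp

/-- the homotopy equivalence -/
noncomputable def MorseSphereEquiv (n : ℕ) :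
    ContinuousMap.HomotopyEquiv (XX n) (Sph n) where
  toFun := Fmap n
  invFun := gmap n
  left_inv := ⟨((H1 n).trans (H2 n)).symm⟩
  right_inv := by
    rw [show (Fmap n).comp (gmap n) = ContinuousMap.id _ from
      ContinuousMap.ext fun u => Fg_id u]

end Topology
end
end MorseAux
end MorseAux








/-- For `n ≥ 1`, the Morse complex of the extended star graph `S_{1,n}`
is homotopy equivalent to the `n`-sphere. -/
theorem morse_extStar_one_n (n : ℕ) (hn : 1 ≤ n) :
    Nonempty (ContinuousMap.HomotopyEquiv
      ((MorseComplex (wedgeGraph 0 1 n 0 0)).realization)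
      (Sph n)) := by
  exact ⟨MorseAux.MorseSphereEquiv n⟩
end

section
/- If a vertex v' of a finite simplicial complex K is dominated by a vertex v (every facet of K containing v' also contains v), then the inclusion of the full subcomplex K − {v'} into K is a homotopy equivalence. -/
/-! The retraction `|K| → |K - v'|` moves the barycentric weight of `v'` onto `v`. A point `x`
lies in a facet `F` of `K`; if `x` has weight on `v'` then `v' ∈ F`, hence `v ∈ F` by domination,
so `x` and its image both lie in the simplex `F`, and the straight-line homotopy between them
stays inside `|K|`. -/

open Function

namespace ASC

variable {V : Type*}

lemma isFacet_iff_maximal {K : ASC V} {s : Finset V} :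
    K.IsFacet s ↔ Maximal (· ∈ K.faces) s :=
  ⟨fun h => ⟨h.1, fun _ ht hst => (h.2 _ ht hst).ge⟩,
    fun h => ⟨h.1, fun _ ht hst => le_antisymm hst (h.2 ht hst)⟩⟩

lemma exists_isFacet_superset [Finite V] (K : ASC V) {s : Finset V} (hs : s ∈ K.faces) :
    ∃ F, K.IsFacet F ∧ s ⊆ F := by
  obtain ⟨F, hsF, hF⟩ := Finite.exists_le_maximal (p := (· ∈ K.faces)) hs
  exact ⟨F, isFacet_iff_maximal.2 hF, hsF⟩

lemma delete_faces_subset (K : ASC V) (v' : V) : (K.delete v').faces ⊆ K.faces :=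
  fun _ hs => hs.1

lemma Dominates.erase_mem_delete [DecidableEq V] {K : ASC V} {v v' : V} (h : K.Dominates v v')
    {F : Finset V} (hF : K.IsFacet F) : F.erase v' ∈ (K.delete v').faces := by
  refine ⟨K.down_closed hF.1 (F.erase_subset v') ?_, F.notMem_erase v'⟩
  by_cases hv' : v' ∈ F
  · exact ⟨v, Finset.mem_erase.2 ⟨h.1, h.2 F hF hv'⟩⟩
  · rw [Finset.erase_eq_of_notMem hv']
    exact K.nonempty_of_mem hF.1

section moveWeight

variable [DecidableEq V]

def moveWeight (v v' : V) (f : V → ℝ) : V → ℝ :=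
  f + Pi.single v (f v') - Pi.single v' (f v')

variable {v v' w : V} {f : V → ℝ}

lemma moveWeight_apply_right (hvv' : v ≠ v') : moveWeight v v' f v' = 0 := by
  simp [moveWeight, hvv']

lemma moveWeight_apply_left (hvv' : v ≠ v') : moveWeight v v' f v = f v + f v' := by
  simp [moveWeight, hvv']

lemma moveWeight_apply_of_ne (hv : w ≠ v) (hv' : w ≠ v') : moveWeight v v' f w = f w := by
  simp [moveWeight, hv, hv']

lemma moveWeight_eq_self (hf : f v' = 0) : moveWeight v v' f = f := by
  simp [moveWeight, hf]

lemma continuous_moveWeight : Continuous (moveWeight v v') := by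
  have hsingle (u : V) : Continuous fun f : V → ℝ => (Pi.single u (f v') : V → ℝ) :=
    (continuous_single u).comp (continuous_apply v')
  exact (continuous_id.add (hsingle v)).sub (hsingle v')

lemma moveWeight_mem_stdSimplex [Fintype V] (hvv' : v ≠ v') (hf : f ∈ stdSimplex ℝ V) :
    moveWeight v v' f ∈ stdSimplex ℝ V := by
  refine ⟨fun w => ?_, by simp [moveWeight, Finset.sum_add_distrib, Finset.sum_sub_distrib, hf.2]⟩
  by_cases hw' : w = v'
  · rw [hw', moveWeight_apply_right hvv']
  by_cases hw : w = v
  · rw [hw, moveWeight_apply_left hvv']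
    exact add_nonneg (hf.1 v) (hf.1 v')
  · rw [moveWeight_apply_of_ne hw hw']
    exact hf.1 w

lemma support_moveWeight_subset (hvv' : v ≠ v') {F : Finset V} (hf : support f ⊆ F)
    (hvF : v' ∈ F → v ∈ F) : support (moveWeight v v' f) ⊆ F.erase v' := by
  intro w hw
  have hw' : w ≠ v' := by
    rintro rfl
    exact hw (moveWeight_apply_right hvv')
  refine Finset.mem_erase.2 ⟨hw', ?_⟩
  by_cases hwv : w = v
  · subst hwv
    rw [mem_support, moveWeight_apply_left hvv'] at hw
    by_cases hfw : f w = 0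
    · exact hvF (hf (by simpa [hfw] using hw))
    · exact hf hfw
  · exact hf (by rwa [mem_support, moveWeight_apply_of_ne hwv hw'] at hw)

end moveWeight

section realization

variable [Fintype V] {K : ASC V}

def realizationInclusion {L : ASC V} (hKL : K.faces ⊆ L.faces) :
    C(K.realization, L.realization) :=
  ⟨fun x => ⟨x.1, x.2.1, x.2.2.1, x.2.2.2.imp fun _ hs => ⟨hKL hs.1, hs.2⟩⟩,
    continuous_subtype_val.subtype_mk _⟩

lemma realization.mem_stdSimplex (x : K.realization) : x.1 ∈ stdSimplex ℝ V :=
  ⟨x.2.1, x.2.2.1⟩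

lemma realization.exists_isFacet_support_subset (x : K.realization) :
    ∃ F, K.IsFacet F ∧ support x.1 ⊆ F := by
  obtain ⟨s, hs, hxs⟩ := x.2.2.2
  obtain ⟨F, hF, hsF⟩ := K.exists_isFacet_superset hs
  exact ⟨F, hF, fun w hw => hsF (hxs w hw)⟩

lemma homotopic_of_forall_exists_face {X : Type*} [TopologicalSpace X]
    (f g : C(X, K.realization))
    (hfg : ∀ x, ∃ s ∈ K.faces, support (f x).1 ⊆ s ∧ support (g x).1 ⊆ s) :
    f.Homotopic g := by
  refine ⟨⟨⟨fun p => ⟨AffineMap.lineMap (f p.2).1 (g p.2).1 (p.1 : ℝ), ?_⟩, ?_⟩, ?_, ?_⟩⟩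
  · obtain ⟨s, hs, hfs, hgs⟩ := hfg p.2
    obtain ⟨hnonneg, hsum⟩ := (convex_stdSimplex ℝ V).lineMap_mem (f p.2).mem_stdSimplex
      (g p.2).mem_stdSimplex p.1.2
    refine ⟨hnonneg, hsum, s, hs, fun w hw => ?_⟩
    by_contra hws
    have hf0 : (f p.2).1 w = 0 := by_contra fun h => hws (hfs h)
    have hg0 : (g p.2).1 w = 0 := by_contra fun h => hws (hgs h)
    exact hw (by rw [AffineMap.pi_lineMap_apply, hf0, hg0, AffineMap.lineMap_same_apply])
  · refine Continuous.subtype_mk ?_ _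
    simp only [AffineMap.lineMap_apply_module]
    fun_prop
  · intro x
    simp
  · intro x
    simp

variable [DecidableEq V] {v v' : V}

lemma Dominates.exists_isFacet_support_moveWeight_subset (h : K.Dominates v v')
    (x : K.realization) :
    ∃ F, K.IsFacet F ∧ support x.1 ⊆ F ∧ support (moveWeight v v' x.1) ⊆ F.erase v' := by
  obtain ⟨F, hF, hxF⟩ := x.exists_isFacet_support_subset
  exact ⟨F, hF, hxF, support_moveWeight_subset h.1 hxF (h.2 F hF)⟩

noncomputable def Dominates.retraction (h : K.Dominates v v') :
    C(K.realization, (K.delete v').realization) where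
  toFun x :=
    ⟨moveWeight v v' x.1, (moveWeight_mem_stdSimplex h.1 x.mem_stdSimplex).1,
      (moveWeight_mem_stdSimplex h.1 x.mem_stdSimplex).2, by
        obtain ⟨F, hF, -, hxF⟩ := h.exists_isFacet_support_moveWeight_subset x
        exact ⟨F.erase v', h.erase_mem_delete hF, hxF⟩⟩
  continuous_toFun := (continuous_moveWeight.comp continuous_subtype_val).subtype_mk _

lemma Dominates.retraction_comp_inclusion (h : K.Dominates v v') :
    h.retraction.comp (realizationInclusion (K.delete_faces_subset v')) =
      ContinuousMap.id _ := by
  ext x w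
  obtain ⟨s, hs, hxs⟩ := x.2.2.2
  exact congrFun (moveWeight_eq_self (by_contra fun hx => hs.2 (hxs v' hx))) w

lemma Dominates.inclusion_comp_retraction_homotopic (h : K.Dominates v v') :
    ((realizationInclusion (K.delete_faces_subset v')).comp h.retraction).Homotopic
      (ContinuousMap.id _) := by
  refine homotopic_of_forall_exists_face _ _ fun x => ?_
  obtain ⟨F, hF, hxF, hmF⟩ := h.exists_isFacet_support_moveWeight_subset x
  exact ⟨F, hF.1, hmF.trans (Finset.coe_subset.2 (F.erase_subset v')), hxF⟩

end realization

end ASC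

/-- If `v'` is dominated by `v` in a finite simplicial complex `K`, then
the inclusion of `K - {v'}` into `K` is a homotopy equivalence. -/
theorem strong_collapse_homotopyEquiv {V : Type*} [Fintype V] [DecidableEq V]
    (K : ASC V) (v v' : V) (h : K.Dominates v v') :
    ∃ e : ContinuousMap.HomotopyEquiv ((K.delete v').realization) (K.realization),
      ∀ x : (K.delete v').realization, (e.toFun x).1 = x.1 :=
  ⟨{ toFun := ASC.realizationInclusion (K.delete_faces_subset v')
     invFun := h.retraction
     left_inv := h.retraction_comp_inclusion ▸ ContinuousMap.Homotopic.refl _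
     right_inv := h.inclusion_comp_retraction_homotopic }, fun _ => rfl⟩
end

section
/- For finite posets P and Q on disjoint underlying sets, the complex of acyclic matchings on the disjoint union P ⊔ Q equals the join of the complexes of acyclic matchings on P and on Q: f(P ⊔ Q) = f(P) * f(Q). -/
/-! A covering pair of `P ⊕ Q` lies inside `P` or inside `Q`, and so does every alternating cycle,
since consecutive elements of a cycle are linked by covering relations. Pairs from different sides
never share an element, so a set of covering pairs of `P ⊕ Q` is an acyclic matching exactly when
its `P`-part and its `Q`-part are; this is the join decomposition. -/

theorem ASC.faces_injective {V : Type*} :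
    Function.Injective (ASC.faces : ASC V → Set (Finset V)) := by
  rintro ⟨_, _, _⟩ ⟨_, _, _⟩ rfl
  rfl

theorem ASC.mem_join_faces_iff {V : Type*} [DecidableEq V] {A B : ASC V} {s : Finset V} :
    s ∈ (A.join B).faces ↔
      s.Nonempty ∧ ∃ a ∈ insert ∅ A.faces, ∃ b ∈ insert ∅ B.faces, s = a ∪ b := by
  constructor
  · rintro ((hs | hs) | ⟨a, ha, b, hb, rfl⟩)
    · exact ⟨A.nonempty_of_mem hs, s, Set.mem_insert_of_mem _ hs, ∅, Set.mem_insert _ _,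
        (Finset.union_empty s).symm⟩
    · exact ⟨B.nonempty_of_mem hs, ∅, Set.mem_insert _ _, s, Set.mem_insert_of_mem _ hs,
        (Finset.empty_union s).symm⟩
    · exact ⟨(A.nonempty_of_mem ha).mono Finset.subset_union_left, a, Set.mem_insert_of_mem _ ha,
        b, Set.mem_insert_of_mem _ hb, rfl⟩
  · rintro ⟨hne, a, rfl | ha, b, rfl | hb, rfl⟩
    · simp at hne
    · exact Or.inl (Or.inr (by rwa [Finset.empty_union]))
    · exact Or.inl (Or.inl (by rwa [Finset.union_empty]))
    · exact Or.inr ⟨a, ha, b, hb, rfl⟩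

theorem ASC.insert_empty_map_faces {V W : Type*} [DecidableEq W] (f : V → W) (K : ASC V) :
    insert ∅ (K.map f).faces = Finset.image f '' insert ∅ K.faces := by
  rw [Set.image_insert_eq, Finset.image_empty]
  rfl

namespace Sum

variable {α β : Type*} [PartialOrder α] [PartialOrder β]

theorem inl_covBy_inl_iff {a b : α} : (inl a : α ⊕ β) ⋖ inl b ↔ a ⋖ b := by
  refine ⟨fun h => ⟨inl_lt_inl_iff.1 h.1, fun c hac hcb => h.2 (inl_lt_inl_iff.2 hac)
    (inl_lt_inl_iff.2 hcb)⟩, fun h => ⟨inl_lt_inl_iff.2 h.1, ?_⟩⟩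
  rintro (c | c) hac hcb
  · exact h.2 (inl_lt_inl_iff.1 hac) (inl_lt_inl_iff.1 hcb)
  · exact not_inr_le_inl hcb.le

theorem inr_covBy_inr_iff {a b : β} : (inr a : α ⊕ β) ⋖ inr b ↔ a ⋖ b :=
  (apply_covBy_apply_iff (OrderIso.sumComm β α)).trans inl_covBy_inl_iff

theorem isLeft_eq_of_covBy {x y : α ⊕ β} (h : x ⋖ y) : x.isLeft = y.isLeft := by
  rcases x with a | a <;> rcases y with b | b
  · rfl
  · exact absurd h.1.le not_inl_le_inr
  · exact absurd h.1.le not_inr_le_inl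
  · rfl

end Sum

section Matchings

variable {P R : Type*} [PartialOrder P] [PartialOrder R]

def EntriesDisjoint {α : Type*} (p q : α × α) : Prop :=
  p.1 ≠ q.1 ∧ p.1 ≠ q.2 ∧ p.2 ≠ q.1 ∧ p.2 ≠ q.2

def IsAcyclicPosetMatching (s : Set (P × P)) : Prop :=
  (∀ p ∈ s, p.1 ⋖ p.2) ∧ s.Pairwise EntriesDisjoint ∧ ¬ HasPosetCycle s

theorem mem_posetMatchingComplex_faces {s : Finset (P × P)} :
    s ∈ (posetMatchingComplex P).faces ↔
      s.Nonempty ∧ IsAcyclicPosetMatching (s : Set (P × P)) :=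
  Iff.rfl

theorem not_hasPosetCycle_empty : ¬ HasPosetCycle (∅ : Set (P × P)) :=
  fun ⟨_, hp, _, _, hmem, _⟩ => hmem 0 (by omega)

theorem insert_empty_posetMatchingComplex_faces :
    insert ∅ (posetMatchingComplex P).faces =
      {s : Finset (P × P) | IsAcyclicPosetMatching (s : Set (P × P))} := by
  ext s
  rcases s.eq_empty_or_nonempty with rfl | hs
  · simp [IsAcyclicPosetMatching, not_hasPosetCycle_empty]
  · simp [Finset.nonempty_iff_ne_empty.1 hs, mem_posetMatchingComplex_faces, hs]

theorem HasPosetCycle.exists_monochromatic {ι : Type*} {c : R → ι}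
    (hc : ∀ x y, x ⋖ y → c x = c y) {S : Set (R × R)} (hS : ∀ p ∈ S, c p.1 = c p.2)
    (h : HasPosetCycle S) : ∃ k, HasPosetCycle {p ∈ S | c p.1 = k} := by
  obtain ⟨p, hp, a, b, hmem, hcov, ha, hb⟩ := h
  have hconst : ∀ i < p, c (a i) = c (a 0) := by
    intro i
    induction i with
    | zero => intro _; rfl
    | succ i ih =>
      intro hi
      have hstep := hc _ _ (hcov i (by omega))
      rw [Nat.mod_eq_of_lt hi] at hstep
      rw [hS _ (hmem _ hi), ← hstep, ih (by omega)]
  exact ⟨c (a 0), p, hp, a, b, fun i hi => ⟨hmem i hi, hconst i hi⟩, hcov, ha, hb⟩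

theorem hasPosetCycle_image_prodMap_iff {f : P → R} (hf : Function.Injective f)
    (hcov : ∀ a b, f a ⋖ f b ↔ a ⋖ b) {S : Set (P × P)} :
    HasPosetCycle (Prod.map f f '' S) ↔ HasPosetCycle S := by
  constructor
  · rintro ⟨p, hp, a, b, hmem, hcovab, ha, hb⟩
    -- beyond the cycle any pair will do, so that `choose` yields a lift on all of `ℕ`
    have hlift : ∀ i, ∃ q : P × P, i < p → q ∈ S ∧ Prod.map f f q = (a i, b i) :=
      fun i =>
        if hi : i < p then (hmem i hi).imp fun _ hq _ => hq
        else (hmem 0 (by omega)).imp fun _ _ hi' => absurd hi' hi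
    choose q hq using hlift
    have hfst : ∀ i < p, f (q i).1 = a i := fun i hi => congrArg Prod.fst (hq i hi).2
    have hsnd : ∀ i < p, f (q i).2 = b i := fun i hi => congrArg Prod.snd (hq i hi).2
    refine ⟨p, hp, fun i => (q i).1, fun i => (q i).2, fun i hi => (hq i hi).1, ?_, ?_, ?_⟩
    · intro i hi
      rw [← hcov, hfst i hi, hsnd _ (Nat.mod_lt _ (by omega))]
      exact hcovab i hi
    · intro i hi j hj hij
      exact ha i hi j hj ((hfst i hi).symm.trans ((congrArg f hij).trans (hfst j hj)))
    · intro i hi j hj hij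
      exact hb i hi j hj ((hsnd i hi).symm.trans ((congrArg f hij).trans (hsnd j hj)))
  · rintro ⟨p, hp, a, b, hmem, hcovab, ha, hb⟩
    exact ⟨p, hp, f ∘ a, f ∘ b, fun i hi => ⟨_, hmem i hi, rfl⟩,
      fun i hi => (hcov _ _).2 (hcovab i hi), fun i hi j hj hij => ha i hi j hj (hf hij),
      fun i hi j hj hij => hb i hi j hj (hf hij)⟩

theorem isAcyclicPosetMatching_image_prodMap_iff {f : P → R} (hf : Function.Injective f)
    (hcov : ∀ a b, f a ⋖ f b ↔ a ⋖ b) {S : Set (P × P)} :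
    IsAcyclicPosetMatching (Prod.map f f '' S) ↔ IsAcyclicPosetMatching S := by
  have hdisj : Function.onFun EntriesDisjoint (Prod.map f f) = EntriesDisjoint := by
    ext p q
    simp [Function.onFun, EntriesDisjoint, hf.ne_iff]
  unfold IsAcyclicPosetMatching
  rw [Set.forall_mem_image, (hf.prodMap hf).injOn.pairwise_image,
    hasPosetCycle_image_prodMap_iff hf hcov]
  simp only [Prod.map_fst, Prod.map_snd, hcov, hdisj]

end Matchings

section DisjointSum

open Sum

variable {P Q : Type*} [PartialOrder P] [PartialOrder Q]

theorem hasPosetCycle_union_image_inl_inr_iff {S : Set (P × P)} {T : Set (Q × Q)} :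
    HasPosetCycle
        (Prod.map inl inl '' S ∪ Prod.map inr inr '' T : Set ((P ⊕ Q) × (P ⊕ Q))) ↔
      HasPosetCycle (Prod.map inl inl '' S : Set ((P ⊕ Q) × (P ⊕ Q))) ∨
        HasPosetCycle (Prod.map inr inr '' T : Set ((P ⊕ Q) × (P ⊕ Q))) := by
  refine ⟨fun h => ?_,
    fun h => h.elim (·.mono Set.subset_union_left) (·.mono Set.subset_union_right)⟩
  obtain ⟨_ | _, hk⟩ := h.exists_monochromatic (c := isLeft) (fun _ _ => isLeft_eq_of_covBy)
    (by rintro _ (⟨_, _, rfl⟩ | ⟨_, _, rfl⟩) <;> rfl)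
  · refine Or.inr (hk.mono ?_)
    rintro _ ⟨⟨_, _, rfl⟩ | hq, hside⟩
    · simp at hside
    · exact hq
  · refine Or.inl (hk.mono ?_)
    rintro _ ⟨hq | ⟨_, _, rfl⟩, hside⟩
    · exact hq
    · simp at hside

theorem isAcyclicPosetMatching_union_image_inl_inr_iff {S : Set (P × P)} {T : Set (Q × Q)} :
    IsAcyclicPosetMatching
        (Prod.map inl inl '' S ∪ Prod.map inr inr '' T : Set ((P ⊕ Q) × (P ⊕ Q))) ↔
      IsAcyclicPosetMatching S ∧ IsAcyclicPosetMatching T := by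
  have hcross : ∀ x ∈ (Prod.map inl inl '' S : Set ((P ⊕ Q) × (P ⊕ Q))),
      ∀ y ∈ (Prod.map inr inr '' T : Set ((P ⊕ Q) × (P ⊕ Q))),
      x ≠ y → EntriesDisjoint x y ∧ EntriesDisjoint y x := by
    rintro _ ⟨_, _, rfl⟩ _ ⟨_, _, rfl⟩ -
    simp [EntriesDisjoint]
  rw [← isAcyclicPosetMatching_image_prodMap_iff (R := P ⊕ Q) inl_injective
      (fun _ _ => inl_covBy_inl_iff),
    ← isAcyclicPosetMatching_image_prodMap_iff (R := P ⊕ Q) inr_injective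
      (fun _ _ => inr_covBy_inr_iff)]
  unfold IsAcyclicPosetMatching
  rw [Set.pairwise_union, and_iff_left hcross, hasPosetCycle_union_image_inl_inr_iff]
  simp only [Set.mem_union, or_imp, forall_and, not_or]
  tauto

theorem eq_union_image_inl_inr_of_covBy {s : Set ((P ⊕ Q) × (P ⊕ Q))}
    (hs : ∀ p ∈ s, p.1 ⋖ p.2) :
    s = Prod.map inl inl '' (Prod.map inl inl ⁻¹' s) ∪
      Prod.map inr inr '' (Prod.map inr inr ⁻¹' s) := by
  rw [Set.image_preimage_eq_inter_range, Set.image_preimage_eq_inter_range,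
    ← Set.inter_union_distrib_left, eq_comm, Set.inter_eq_left]
  rintro ⟨x | x, y | y⟩ hxy
  · exact Or.inl ⟨(x, y), rfl⟩
  · exact absurd (hs _ hxy).1.le not_inl_le_inr
  · exact absurd (hs _ hxy).1.le not_inr_le_inl
  · exact Or.inr ⟨(x, y), rfl⟩

theorem isAcyclicPosetMatching_sum_iff [DecidableEq P] [DecidableEq Q]
    {s : Finset ((P ⊕ Q) × (P ⊕ Q))} :
    IsAcyclicPosetMatching (s : Set ((P ⊕ Q) × (P ⊕ Q))) ↔
      ∃ A : Finset (P × P), IsAcyclicPosetMatching (A : Set (P × P)) ∧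
        ∃ B : Finset (Q × Q), IsAcyclicPosetMatching (B : Set (Q × Q)) ∧
          s = A.image (Prod.map inl inl) ∪ B.image (Prod.map inr inr) := by
  constructor
  · intro hs
    have hl : (Prod.map inl inl : P × P → (P ⊕ Q) × (P ⊕ Q)).Injective :=
      inl_injective.prodMap inl_injective
    have hr : (Prod.map inr inr : Q × Q → (P ⊕ Q) × (P ⊕ Q)).Injective :=
      inr_injective.prodMap inr_injective
    have hsplit : s = (s.preimage _ hl.injOn).image (Prod.map inl inl) ∪
        (s.preimage _ hr.injOn).image (Prod.map inr inr) := by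
      apply Finset.coe_injective
      push_cast [Finset.coe_preimage]
      exact eq_union_image_inl_inr_of_covBy hs.1
    rw [hsplit, Finset.coe_union, Finset.coe_image, Finset.coe_image,
      isAcyclicPosetMatching_union_image_inl_inr_iff] at hs
    exact ⟨_, hs.1, _, hs.2, hsplit⟩
  · rintro ⟨A, hA, B, hB, rfl⟩
    push_cast
    exact isAcyclicPosetMatching_union_image_inl_inr_iff.2 ⟨hA, hB⟩

end DisjointSum

theorem posetMatchingComplex_sum_general {P Q : Type*} [PartialOrder P] [PartialOrder Q]
    [DecidableEq P] [DecidableEq Q] :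
    posetMatchingComplex (P ⊕ Q) =
      ASC.join
        ((posetMatchingComplex P).map (fun p => (Sum.inl p.1, Sum.inl p.2)))
        ((posetMatchingComplex Q).map (fun p => (Sum.inr p.1, Sum.inr p.2))) := by
  change _ = ASC.join ((posetMatchingComplex P).map (Prod.map Sum.inl Sum.inl))
    ((posetMatchingComplex Q).map (Prod.map Sum.inr Sum.inr))
  refine ASC.faces_injective (Set.ext fun s => ?_)
  simp only [mem_posetMatchingComplex_faces, ASC.mem_join_faces_iff, ASC.insert_empty_map_faces,
    insert_empty_posetMatchingComplex_faces, Set.exists_mem_image, Set.mem_ofPred_eq,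
    isAcyclicPosetMatching_sum_iff]

/-- For finite posets `P` and `Q`, the complex of acyclic matchings on
the disjoint union `P ⊕ Q` is the join: `f(P ⊔ Q) = f(P) * f(Q)`. -/
theorem posetMatchingComplex_sum {P Q : Type*} [PartialOrder P] [PartialOrder Q]
    [DecidableEq P] [DecidableEq Q] [Fintype P] [Fintype Q] :
    posetMatchingComplex (P ⊕ Q) =
      ASC.join
        ((posetMatchingComplex P).map (fun p => (Sum.inl p.1, Sum.inl p.2)))
        ((posetMatchingComplex Q).map (fun p => (Sum.inr p.1, Sum.inr p.2))) :=
  posetMatchingComplex_sum_general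
end
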